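/- arXiv:math/0102010 — 4 statements merged into one kernel-verified Lean document; each statement's English description precedes it below -/
import Mathlib

section
/- The bilinear form ⟨a, b⟩ = λ⁻² T(a e₂ e₁ w b) (a ∈ A, b ∈ B) is non-degenerate: if ⟨a, b⟩ = 0 for all b ∈ B then a = 0, and if ⟨a, b⟩ = 0 for all a ∈ A then b = 0. -/
open scoped TensorProduct
open TensorProduct

/-- A symmetric Markov extension `N ⊆ M` of `k`-algebras satisfying the symmetric
product and weak irreducibility assumptions, together with its Jones tower
`N ⊆ M ⊆ M₁ ⊆ M₂` (the ambient algebra `R` plays the role of `M₂`), the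
normalized trace `T = T₂` and the depth two conditions. -/
structure D2 (k : Type*) [Field k] (R : Type*) [Ring R] [Algebra k R] where
  N : Subalgebra k R
  M : Subalgebra k R
  M1 : Subalgebra k R
  hNM : N ≤ M
  hMM1 : M ≤ M1
  E : R →ₗ[k] R
  EM : R →ₗ[k] R
  EM1 : R →ₗ[k] R
  lam : k
  lam_ne : lam ≠ 0
  e1 : R
  e2 : R
  T : R →ₗ[k] k
  -- Markov extension data for E : M → N
  nE : ℕ
  xb : Fin nE → R
  yb : Fin nE → R
  hxb : ∀ i, xb i ∈ M
  hyb : ∀ i, yb i ∈ M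
  hE_mem : ∀ x ∈ M, E x ∈ N
  hE_one : E 1 = 1
  hE_left : ∀ n ∈ N, ∀ x ∈ M, E (n * x) = n * E x
  hE_right : ∀ n ∈ N, ∀ x ∈ M, E (x * n) = E x * n
  hdual1 : ∀ m ∈ M, ∑ i, E (m * xb i) * yb i = m
  hdual2 : ∀ m ∈ M, ∑ i, xb i * E (yb i * m) = m
  hindex : ∑ i, xb i * yb i = lam⁻¹ • (1 : R)
  hindex' : ∑ i, yb i * xb i = lam⁻¹ • (1 : R)
  -- the normalized trace (T₂ on M₂ = R; it restricts to T on N, T₀ on M, T₁ on M₁)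
  hT_one : T 1 = 1
  hT_tr : ∀ x y : R, T (x * y) = T (y * x)
  hTE : ∀ x ∈ M, T (E x) = T x
  hTEM : ∀ x ∈ M1, T (EM x) = T x
  hTEM1 : ∀ x : R, T (EM1 x) = T x
  -- symmetry of the Markov extension: E u = u E for all u ∈ U = C_M(N)
  hsymm : ∀ u ∈ M, (∀ y ∈ N, u * y = y * u) → ∀ x ∈ M, E (u * x) = E (x * u)
  -- the basic construction M₁ = M e₁ M
  he1_mem : e1 ∈ M1
  he1_idem : e1 * e1 = e1
  he1_N : ∀ y ∈ N, e1 * y = y * e1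
  hM1_gen : M1.toSubmodule = Submodule.span k {z : R | ∃ m ∈ M, ∃ m' ∈ M, z = m * e1 * m'}
  hEM_mem : ∀ x ∈ M1, EM x ∈ M
  hEM_one : EM 1 = 1
  hEM_left : ∀ m ∈ M, ∀ x ∈ M1, EM (m * x) = m * EM x
  hEM_right : ∀ m ∈ M, ∀ x ∈ M1, EM (x * m) = EM x * m
  hEM_e1 : ∀ m ∈ M, ∀ m' ∈ M, EM (m * e1 * m') = lam • (m * m')
  he1_jones : ∀ x ∈ M, e1 * x * e1 = e1 * E x
  he1_jones' : ∀ x ∈ M, e1 * E x = E x * e1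
  -- the iterated basic construction M₂ = M₁ e₂ M₁ (M₂ = R is the ambient algebra)
  he2_idem : e2 * e2 = e2
  he2_M : ∀ m ∈ M, e2 * m = m * e2
  hM2_gen : (⊤ : Submodule k R) = Submodule.span k {z : R | ∃ x ∈ M1, ∃ y ∈ M1, z = x * e2 * y}
  hEM1_mem : ∀ x : R, EM1 x ∈ M1
  hEM1_one : EM1 1 = 1
  hEM1_left : ∀ m ∈ M1, ∀ x : R, EM1 (m * x) = m * EM1 x
  hEM1_right : ∀ m ∈ M1, ∀ x : R, EM1 (x * m) = EM1 x * m
  hEM1_e2 : ∀ x ∈ M1, ∀ y ∈ M1, EM1 (x * e2 * y) = lam • (x * y)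
  he2_jones : ∀ x ∈ M1, e2 * x * e2 = e2 * EM x
  he2_jones' : ∀ x ∈ M1, e2 * EM x = EM x * e2
  -- braid-like relations and Pimsner-Popa relations
  hbraid1 : e1 * e2 * e1 = lam • e1
  hbraid2 : e2 * e1 * e2 = lam • e2
  hPP1 : ∀ x ∈ M1, x * e1 = lam⁻¹ • (EM (x * e1) * e1)
  hPP1' : ∀ x ∈ M1, e1 * x = lam⁻¹ • (e1 * EM (e1 * x))
  hPP2 : ∀ x : R, x * e2 = lam⁻¹ • (EM1 (x * e2) * e2)
  hPP2' : ∀ x : R, e2 * x = lam⁻¹ • (e2 * EM1 (e2 * x))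
  -- weak irreducibility: U = C_M(N) is Kanzaki separable with symmetric
  -- separability element ∑ sp i ⊗ sq i, and T₀ = T|U is non-degenerate on U
  nS : ℕ
  sp : Fin nS → R
  sq : Fin nS → R
  hsp : ∀ i, sp i ∈ M ∧ ∀ y ∈ N, sp i * y = y * sp i
  hsq : ∀ i, sq i ∈ M ∧ ∀ y ∈ N, sq i * y = y * sq i
  hsep_one : ∑ i, sp i * sq i = 1
  hsep_cas : ∀ u ∈ M, (∀ y ∈ N, u * y = y * u) →
      ∑ i, (u * sp i) ⊗ₜ[k] sq i = ∑ i, sp i ⊗ₜ[k] (sq i * u)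
  hsep_symm : ∑ i, sp i ⊗ₜ[k] sq i = ∑ i, sq i ⊗ₜ[k] sp i
  hU_nondeg : ∀ u ∈ M, (∀ y ∈ N, u * y = y * u) →
      (∀ u' ∈ M, (∀ y ∈ N, u' * y = y * u') → T (u * u') = 0) → u = 0
  -- depth two conditions
  nA : ℕ
  zb : Fin nA → R
  wb : Fin nA → R
  hzb : ∀ j, zb j ∈ M1 ∧ ∀ y ∈ N, zb j * y = y * zb j
  hwb : ∀ j, wb j ∈ M1 ∧ ∀ y ∈ N, wb j * y = y * wb j
  hdualA1 : ∀ x ∈ M1, ∑ j, EM (x * zb j) * wb j = x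
  hdualA2 : ∀ x ∈ M1, ∑ j, zb j * EM (wb j * x) = x
  nB : ℕ
  ub : Fin nB → R
  vb : Fin nB → R
  hub : ∀ i, ∀ y ∈ M, ub i * y = y * ub i
  hvb : ∀ i, ∀ y ∈ M, vb i * y = y * vb i
  hdualB1 : ∀ x : R, ∑ i, EM1 (x * ub i) * vb i = x
  hdualB2 : ∀ x : R, ∑ i, ub i * EM1 (vb i * x) = x

namespace D2

variable {k : Type*} [Field k] {R : Type*} [Ring R] [Algebra k R]

/-- `U = C_M(N)`. -/
def U (D : D2 k R) : Subalgebra k R := D.M ⊓ Subalgebra.centralizer k (D.N : Set R)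

/-- `V = C_{M₁}(M)`. -/
def V (D : D2 k R) : Subalgebra k R := D.M1 ⊓ Subalgebra.centralizer k (D.M : Set R)

/-- `W = C_{M₂}(M₁)`. -/
def W (D : D2 k R) : Subalgebra k R := Subalgebra.centralizer k (D.M1 : Set R)

/-- `A = C_{M₁}(N)`. -/
def A (D : D2 k R) : Subalgebra k R := D.M1 ⊓ Subalgebra.centralizer k (D.N : Set R)

/-- `B = C_{M₂}(M)`. -/
def B (D : D2 k R) : Subalgebra k R := Subalgebra.centralizer k (D.M : Set R)

/-- `C = C_{M₂}(N)`. -/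
def C (D : D2 k R) : Subalgebra k R := Subalgebra.centralizer k (D.N : Set R)

end D2
/-- Extension of the depth two setting by the symmetric separability element
`f = ∑ f1 i ⊗ f2 i` of `V = C_{M₁}(M)` and the invertible central element `w` of `V`
such that `f⁽¹⁾ ⊗ w f⁽²⁾` is the dual bases tensor of the trace `T` on `V`. -/
structure D2S (k : Type*) [Field k] (R : Type*) [Ring R] [Algebra k R] extends D2 k R where
  nV : ℕ
  f1 : Fin nV → R
  f2 : Fin nV → R
  hf1 : ∀ i, f1 i ∈ M1 ∧ ∀ y ∈ M, f1 i * y = y * f1 i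
  hf2 : ∀ i, f2 i ∈ M1 ∧ ∀ y ∈ M, f2 i * y = y * f2 i
  hf_one : ∑ i, f1 i * f2 i = 1
  hf_cas : ∀ v ∈ M1, (∀ y ∈ M, v * y = y * v) →
      ∑ i, (v * f1 i) ⊗ₜ[k] f2 i = ∑ i, f1 i ⊗ₜ[k] (f2 i * v)
  hf_symm : ∑ i, f1 i ⊗ₜ[k] f2 i = ∑ i, f2 i ⊗ₜ[k] f1 i
  w : R
  winv : R
  hw_mem : w ∈ M1 ∧ ∀ y ∈ M, w * y = y * w
  hwinv_mem : winv ∈ M1 ∧ ∀ y ∈ M, winv * y = y * winv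
  hw_inv : w * winv = 1 ∧ winv * w = 1
  hw_central : ∀ v ∈ M1, (∀ y ∈ M, v * y = y * v) → w * v = v * w
  hw_def : w * (∑ i, T (f2 i) • f1 i) = 1
  hw_dual : ∀ v ∈ M1, (∀ y ∈ M, v * y = y * v) → ∑ i, T (v * (w * f2 i)) • f1 i = v

namespace D2S

variable {k : Type*} [Field k] {R : Type*} [Ring R] [Algebra k R]

/-- `p = λ⁻¹ EM(e₁ w)`. -/
noncomputable def pw (D : D2S k R) : R := D.lam⁻¹ • D.EM (D.e1 * D.w)

/-- `q = λ⁻¹ EM(e₁ w⁻¹)`. -/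
noncomputable def qw (D : D2S k R) : R := D.lam⁻¹ • D.EM (D.e1 * D.winv)

variable (D : D2S k R)

lemma e1w_mem : D.e1 * D.w ∈ D.M1 := mul_mem D.he1_mem D.hw_mem.1

lemma e1winv_mem : D.e1 * D.winv ∈ D.M1 := mul_mem D.he1_mem D.hwinv_mem.1

lemma pw_mem : D.pw ∈ D.M := D.M.smul_mem (D.hEM_mem _ (e1w_mem D)) _

lemma qw_mem : D.qw ∈ D.M := D.M.smul_mem (D.hEM_mem _ (e1winv_mem D)) _

lemma e1_mul_w : D.e1 * D.w = D.e1 * D.pw := by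
  rw [pw, mul_smul_comm]; exact D.hPP1' D.w D.hw_mem.1

lemma e1_mul_winv : D.e1 * D.winv = D.e1 * D.qw := by
  rw [qw, mul_smul_comm]; exact D.hPP1' D.winv D.hwinv_mem.1

lemma e1_EMw : D.e1 * D.EM (D.e1 * D.w) = D.lam • (D.e1 * D.w) := by
  calc D.e1 * D.EM (D.e1 * D.w)
      = D.lam • (D.lam⁻¹ • (D.e1 * D.EM (D.e1 * D.w))) := by
        rw [smul_smul, mul_inv_cancel₀ D.lam_ne, one_smul]
    _ = D.lam • (D.e1 * D.w) := by rw [← D.hPP1' D.w D.hw_mem.1]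

lemma e1_EMwinv : D.e1 * D.EM (D.e1 * D.winv) = D.lam • (D.e1 * D.winv) := by
  calc D.e1 * D.EM (D.e1 * D.winv)
      = D.lam • (D.lam⁻¹ • (D.e1 * D.EM (D.e1 * D.winv))) := by
        rw [smul_smul, mul_inv_cancel₀ D.lam_ne, one_smul]
    _ = D.lam • (D.e1 * D.winv) := by rw [← D.hPP1' D.winv D.hwinv_mem.1]

lemma EM_e1 : D.EM D.e1 = D.lam • (1 : R) := by
  have h := D.hEM_e1 1 (one_mem _) 1 (one_mem _)
  simpa using h

lemma pw_mul_qw : D.pw * D.qw = 1 := by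
  have hq : D.EM (D.e1 * D.winv) ∈ D.M := D.hEM_mem _ (e1winv_mem D)
  have key : D.EM (D.e1 * D.w) * D.EM (D.e1 * D.winv) = D.lam • (D.lam • (1 : R)) := by
    calc D.EM (D.e1 * D.w) * D.EM (D.e1 * D.winv)
        = D.EM ((D.e1 * D.w) * D.EM (D.e1 * D.winv)) :=
          (D.hEM_right _ hq _ (e1w_mem D)).symm
      _ = D.EM (D.lam • (D.e1 * (D.winv * D.w))) := by
          congr 1
          calc (D.e1 * D.w) * D.EM (D.e1 * D.winv)
              = D.e1 * (D.w * D.EM (D.e1 * D.winv)) := by rw [mul_assoc]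
            _ = D.e1 * (D.EM (D.e1 * D.winv) * D.w) := by rw [D.hw_mem.2 _ hq]
            _ = (D.e1 * D.EM (D.e1 * D.winv)) * D.w := by rw [mul_assoc]
            _ = (D.lam • (D.e1 * D.winv)) * D.w := by rw [e1_EMwinv]
            _ = D.lam • (D.e1 * (D.winv * D.w)) := by rw [smul_mul_assoc, mul_assoc]
      _ = D.lam • (D.lam • (1 : R)) := by rw [D.hw_inv.2, mul_one, map_smul, EM_e1]
  rw [pw, qw, smul_mul_assoc, mul_smul_comm, key]
  rw [smul_smul, smul_smul, smul_smul]
  have h0 := D.lam_ne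
  rw [show D.lam⁻¹ * D.lam⁻¹ * D.lam * D.lam = 1 by field_simp, one_smul]

lemma qw_mul_pw : D.qw * D.pw = 1 := by
  have hp : D.EM (D.e1 * D.w) ∈ D.M := D.hEM_mem _ (e1w_mem D)
  have key : D.EM (D.e1 * D.winv) * D.EM (D.e1 * D.w) = D.lam • (D.lam • (1 : R)) := by
    calc D.EM (D.e1 * D.winv) * D.EM (D.e1 * D.w)
        = D.EM ((D.e1 * D.winv) * D.EM (D.e1 * D.w)) :=
          (D.hEM_right _ hp _ (e1winv_mem D)).symm
      _ = D.EM (D.lam • (D.e1 * (D.w * D.winv))) := by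
          congr 1
          calc (D.e1 * D.winv) * D.EM (D.e1 * D.w)
              = D.e1 * (D.winv * D.EM (D.e1 * D.w)) := by rw [mul_assoc]
            _ = D.e1 * (D.EM (D.e1 * D.w) * D.winv) := by rw [D.hwinv_mem.2 _ hp]
            _ = (D.e1 * D.EM (D.e1 * D.w)) * D.winv := by rw [mul_assoc]
            _ = (D.lam • (D.e1 * D.w)) * D.winv := by rw [e1_EMw]
            _ = D.lam • (D.e1 * (D.w * D.winv)) := by rw [smul_mul_assoc, mul_assoc]
      _ = D.lam • (D.lam • (1 : R)) := by rw [D.hw_inv.1, mul_one, map_smul, EM_e1]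
  rw [pw, qw, smul_mul_assoc, mul_smul_comm, key]
  rw [smul_smul, smul_smul, smul_smul]
  have h0 := D.lam_ne
  rw [show D.lam⁻¹ * D.lam⁻¹ * D.lam * D.lam = 1 by field_simp, one_smul]

lemma qw_N_comm : ∀ y ∈ D.N, y * D.qw = D.qw * y := by
  intro y hy
  have hyM : y ∈ D.M := D.hNM hy
  rw [qw, mul_smul_comm, smul_mul_assoc]
  congr 1
  calc y * D.EM (D.e1 * D.winv)
      = D.EM (y * (D.e1 * D.winv)) := (D.hEM_left y hyM _ (e1winv_mem D)).symm
    _ = D.EM ((D.e1 * D.winv) * y) := by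
        congr 1
        calc y * (D.e1 * D.winv) = (y * D.e1) * D.winv := (mul_assoc _ _ _).symm
          _ = (D.e1 * y) * D.winv := by rw [← D.he1_N y hy]
          _ = D.e1 * (y * D.winv) := mul_assoc _ _ _
          _ = D.e1 * (D.winv * y) := by rw [← D.hwinv_mem.2 y hyM]
          _ = (D.e1 * D.winv) * y := (mul_assoc _ _ _).symm
    _ = D.EM (D.e1 * D.winv) * y := D.hEM_right y hyM _ (e1winv_mem D)

/-- The `M`-bimodule map `M₁ → M₁` sending `m e₁ m' ↦ m z m'`, for `z ∈ A`. -/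
noncomputable def theta (D : D2S k R) (z X : R) : R :=
  D.lam⁻¹ • ∑ i, D.xb i * (z * D.EM (D.e1 * (D.yb i * X)))

lemma theta_sum {ι : Type*} (s : Finset ι) (z : R) (f : ι → R) :
    theta D z (∑ t ∈ s, f t) = ∑ t ∈ s, theta D z (f t) := by
  unfold theta
  simp only [Finset.mul_sum, map_sum, Finset.smul_sum]
  exact Finset.sum_comm

lemma theta_mem {z : R} (hz : z ∈ D.M1) {X : R} (hX : X ∈ D.M1) : theta D z X ∈ D.M1 := by
  refine D.M1.smul_mem (sum_mem fun i _ => ?_) _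
  exact mul_mem (D.hMM1 (D.hxb i)) (mul_mem hz
    (D.hMM1 (D.hEM_mem _ (mul_mem D.he1_mem (mul_mem (D.hMM1 (D.hyb i)) hX)))))

lemma theta_me1m {z : R} (hzc : ∀ y ∈ D.N, y * z = z * y) {m m' : R}
    (hm : m ∈ D.M) (hm' : m' ∈ D.M) :
    theta D z (m * (D.e1 * m')) = m * (z * m') := by
  unfold theta
  have step : ∀ i : Fin D.nE, D.EM (D.e1 * (D.yb i * (m * (D.e1 * m'))))
      = D.lam • (D.E (D.yb i * m) * m') := by
    intro i
    have hym : D.yb i * m ∈ D.M := mul_mem (D.hyb i) hm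
    have h1 : D.e1 * (D.yb i * (m * (D.e1 * m'))) = (D.e1 * (D.yb i * m) * D.e1) * m' := by
      simp only [mul_assoc]
    rw [h1, D.he1_jones _ hym]
    have hE : D.E (D.yb i * m) ∈ D.N := D.hE_mem _ hym
    have h2 : (D.e1 * D.E (D.yb i * m)) * m' = 1 * D.e1 * (D.E (D.yb i * m) * m') := by
      simp only [one_mul, mul_assoc]
    rw [h2, D.hEM_e1 1 (one_mem _) _ (mul_mem (D.hNM hE) hm'), one_mul]
  simp only [step]
  have step2 : ∀ i : Fin D.nE, D.xb i * (z * (D.lam • (D.E (D.yb i * m) * m')))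
      = D.lam • ((D.xb i * D.E (D.yb i * m)) * (z * m')) := by
    intro i
    have hE : D.E (D.yb i * m) ∈ D.N := D.hE_mem _ (mul_mem (D.hyb i) hm)
    rw [mul_smul_comm, mul_smul_comm]
    congr 1
    calc D.xb i * (z * (D.E (D.yb i * m) * m'))
        = D.xb i * ((z * D.E (D.yb i * m)) * m') := by rw [← mul_assoc z]
      _ = D.xb i * ((D.E (D.yb i * m) * z) * m') := by rw [← hzc _ hE]
      _ = (D.xb i * D.E (D.yb i * m)) * (z * m') := by simp only [mul_assoc]
  simp only [step2]
  rw [← Finset.smul_sum, ← Finset.sum_mul, D.hdual2 m hm, smul_smul,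
    inv_mul_cancel₀ D.lam_ne, one_smul]

lemma theta_left {z : R} (hzc : ∀ y ∈ D.N, y * z = z * y) {m X : R}
    (hm : m ∈ D.M) (hX : X ∈ D.M1) :
    theta D z (m * X) = m * theta D z X := by
  unfold theta
  have key : ∀ i : Fin D.nE, D.EM (D.e1 * (D.yb i * (m * X)))
      = ∑ i', D.E (D.yb i * (m * D.xb i')) * D.EM (D.e1 * (D.yb i' * X)) := by
    intro i
    have hym : D.yb i * m ∈ D.M := mul_mem (D.hyb i) hm
    have h1 : D.yb i * (m * X) = (∑ i', D.E ((D.yb i * m) * D.xb i') * D.yb i') * X := by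
      rw [D.hdual1 _ hym, ← mul_assoc]
    rw [h1, Finset.sum_mul, Finset.mul_sum, map_sum]
    refine Finset.sum_congr rfl fun i' _ => ?_
    have hEm : (D.yb i * m) * D.xb i' ∈ D.M := mul_mem hym (D.hxb i')
    have hEii : D.E ((D.yb i * m) * D.xb i') ∈ D.N := D.hE_mem _ hEm
    calc D.EM (D.e1 * (D.E ((D.yb i * m) * D.xb i') * D.yb i' * X))
        = D.EM ((D.e1 * D.E ((D.yb i * m) * D.xb i')) * (D.yb i' * X)) := by
          simp only [mul_assoc]
      _ = D.EM ((D.E ((D.yb i * m) * D.xb i') * D.e1) * (D.yb i' * X)) := by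
          rw [D.he1_jones' _ hEm]
      _ = D.EM (D.E ((D.yb i * m) * D.xb i') * (D.e1 * (D.yb i' * X))) := by
          simp only [mul_assoc]
      _ = D.E ((D.yb i * m) * D.xb i') * D.EM (D.e1 * (D.yb i' * X)) :=
          D.hEM_left _ (D.hNM hEii) _
            (mul_mem D.he1_mem (mul_mem (D.hMM1 (D.hyb i')) hX))
      _ = D.E (D.yb i * (m * D.xb i')) * D.EM (D.e1 * (D.yb i' * X)) := by
          rw [mul_assoc]
  simp only [key, Finset.mul_sum]
  have step2 : ∀ i i' : Fin D.nE,
      D.xb i * (z * (D.E (D.yb i * (m * D.xb i')) * D.EM (D.e1 * (D.yb i' * X))))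
      = (D.xb i * D.E (D.yb i * (m * D.xb i'))) * (z * D.EM (D.e1 * (D.yb i' * X))) := by
    intro i i'
    have hE : D.E (D.yb i * (m * D.xb i')) ∈ D.N :=
      D.hE_mem _ (mul_mem (D.hyb i) (mul_mem hm (D.hxb i')))
    calc D.xb i * (z * (D.E (D.yb i * (m * D.xb i')) * D.EM (D.e1 * (D.yb i' * X))))
        = D.xb i * ((z * D.E (D.yb i * (m * D.xb i'))) * D.EM (D.e1 * (D.yb i' * X))) := by
          rw [← mul_assoc z]
      _ = D.xb i * ((D.E (D.yb i * (m * D.xb i')) * z) * D.EM (D.e1 * (D.yb i' * X))) := by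
          rw [← hzc _ hE]
      _ = (D.xb i * D.E (D.yb i * (m * D.xb i'))) * (z * D.EM (D.e1 * (D.yb i' * X))) := by
          simp only [mul_assoc]
  simp only [step2]
  rw [Finset.sum_comm]
  have step3 : ∀ i' : Fin D.nE,
      (∑ i, (D.xb i * D.E (D.yb i * (m * D.xb i'))) * (z * D.EM (D.e1 * (D.yb i' * X))))
      = m * (D.xb i' * (z * D.EM (D.e1 * (D.yb i' * X)))) := by
    intro i'
    rw [← Finset.sum_mul, D.hdual2 _ (mul_mem hm (D.hxb i'))]
    simp only [mul_assoc]
  simp only [step3]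
  rw [← Finset.mul_sum, mul_smul_comm]

lemma theta_right {z : R} {m X : R} (hm : m ∈ D.M) (hX : X ∈ D.M1) :
    theta D z (X * m) = theta D z X * m := by
  unfold theta
  rw [smul_mul_assoc, Finset.sum_mul]
  congr 1
  refine Finset.sum_congr rfl fun i _ => ?_
  have h1 : D.e1 * (D.yb i * (X * m)) = (D.e1 * (D.yb i * X)) * m := by
    simp only [mul_assoc]
  rw [h1, D.hEM_right m hm _ (mul_mem D.he1_mem (mul_mem (D.hMM1 (D.hyb i)) hX))]
  simp only [mul_assoc]

lemma theta_e1 {z : R} (hzc : ∀ y ∈ D.N, y * z = z * y) : theta D z D.e1 = z := by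
  have h := theta_me1m D hzc (one_mem D.M) (one_mem D.M)
  simpa using h

/-- The preimage in `B` of `z ∈ A` under the map `b ↦ EM₁(e₂ e₁ b)`. -/
noncomputable def bz (D : D2S k R) (z : R) : R :=
  D.lam⁻¹ • ∑ j, D.zb j * (D.e2 * theta D z (D.wb j))

lemma bz_comm {z : R} (hzc : ∀ y ∈ D.N, y * z = z * y) (hz1 : z ∈ D.M1) :
    ∀ m ∈ D.M, m * bz D z = bz D z * m := by
  intro m hm
  unfold bz
  rw [mul_smul_comm, smul_mul_assoc]
  congr 1
  rw [Finset.mul_sum, Finset.sum_mul]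
  have lhs_eq : ∀ j, m * (D.zb j * (D.e2 * theta D z (D.wb j)))
      = ∑ j', D.zb j' * (D.e2 * theta D z (D.EM (D.wb j' * (m * D.zb j)) * D.wb j)) := by
    intro j
    have hmzb : m * D.zb j ∈ D.M1 := mul_mem (D.hMM1 hm) (D.hzb j).1
    have h1 : m * D.zb j = ∑ j', D.zb j' * D.EM (D.wb j' * (m * D.zb j)) :=
      (D.hdualA2 _ hmzb).symm
    calc m * (D.zb j * (D.e2 * theta D z (D.wb j)))
        = (m * D.zb j) * (D.e2 * theta D z (D.wb j)) := by rw [mul_assoc]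
      _ = ∑ j', (D.zb j' * D.EM (D.wb j' * (m * D.zb j))) * (D.e2 * theta D z (D.wb j)) := by
          conv_lhs => rw [h1]
          rw [Finset.sum_mul]
      _ = ∑ j', D.zb j' * (D.e2 * theta D z (D.EM (D.wb j' * (m * D.zb j)) * D.wb j)) := by
          refine Finset.sum_congr rfl fun j' _ => ?_
          have hn : D.EM (D.wb j' * (m * D.zb j)) ∈ D.M :=
            D.hEM_mem _ (mul_mem (D.hwb j').1 hmzb)
          calc (D.zb j' * D.EM (D.wb j' * (m * D.zb j))) * (D.e2 * theta D z (D.wb j))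
              = D.zb j' * ((D.EM (D.wb j' * (m * D.zb j)) * D.e2) * theta D z (D.wb j)) := by
                simp only [mul_assoc]
            _ = D.zb j' * ((D.e2 * D.EM (D.wb j' * (m * D.zb j))) * theta D z (D.wb j)) := by
                rw [← D.he2_M _ hn]
            _ = D.zb j' * (D.e2 * (D.EM (D.wb j' * (m * D.zb j)) * theta D z (D.wb j))) := by
                simp only [mul_assoc]
            _ = D.zb j' * (D.e2 * theta D z (D.EM (D.wb j' * (m * D.zb j)) * D.wb j)) := by
                rw [theta_left D hzc hn (D.hwb j).1]
  simp only [lhs_eq]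
  rw [Finset.sum_comm]
  refine Finset.sum_congr rfl fun j' _ => ?_
  have hsum : ∑ j, D.EM (D.wb j' * (m * D.zb j)) * D.wb j = D.wb j' * m := by
    have h := D.hdualA1 (D.wb j' * m) (mul_mem (D.hwb j').1 (D.hMM1 hm))
    simpa only [mul_assoc] using h
  calc (∑ j, D.zb j' * (D.e2 * theta D z (D.EM (D.wb j' * (m * D.zb j)) * D.wb j)))
      = D.zb j' * (D.e2 * theta D z (∑ j, D.EM (D.wb j' * (m * D.zb j)) * D.wb j)) := by
        rw [theta_sum, Finset.mul_sum, Finset.mul_sum]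
    _ = D.zb j' * (D.e2 * theta D z (D.wb j' * m)) := by rw [hsum]
    _ = D.zb j' * (D.e2 * (theta D z (D.wb j') * m)) := by
        rw [theta_right D hm (D.hwb j').1]
    _ = (D.zb j' * (D.e2 * theta D z (D.wb j'))) * m := by simp only [mul_assoc]

lemma bz_mem_B {z : R} (hzc : ∀ y ∈ D.N, y * z = z * y) (hz1 : z ∈ D.M1) :
    bz D z ∈ D.toD2.B := by
  have : bz D z ∈ Subalgebra.centralizer k (D.M : Set R) :=
    (Subalgebra.mem_centralizer_iff k).mpr (bz_comm D hzc hz1)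
  exact this

lemma EM1_e2_e1_bz {z : R} (hzc : ∀ y ∈ D.N, y * z = z * y) (hz1 : z ∈ D.M1) :
    D.EM1 (D.e2 * (D.e1 * bz D z)) = z := by
  unfold bz
  rw [mul_smul_comm, mul_smul_comm, map_smul, Finset.mul_sum, Finset.mul_sum, map_sum]
  have step : ∀ j, D.EM1 (D.e2 * (D.e1 * (D.zb j * (D.e2 * theta D z (D.wb j)))))
      = D.lam • (D.EM (D.e1 * D.zb j) * theta D z (D.wb j)) := by
    intro j
    have hθ : theta D z (D.wb j) ∈ D.M1 := theta_mem D hz1 (D.hwb j).1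
    have hx : D.e1 * D.zb j ∈ D.M1 := mul_mem D.he1_mem (D.hzb j).1
    have h1 : D.e2 * (D.e1 * (D.zb j * (D.e2 * theta D z (D.wb j))))
        = (D.e2 * (D.e1 * D.zb j) * D.e2) * theta D z (D.wb j) := by
      simp only [mul_assoc]
    rw [h1, D.he2_jones _ hx]
    have h2 : (D.e2 * D.EM (D.e1 * D.zb j)) * theta D z (D.wb j)
        = 1 * D.e2 * (D.EM (D.e1 * D.zb j) * theta D z (D.wb j)) := by
      simp only [one_mul, mul_assoc]
    rw [h2, D.hEM1_e2 1 (one_mem _) _ (mul_mem (D.hMM1 (D.hEM_mem _ hx)) hθ), one_mul]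
  simp only [step]
  rw [← Finset.smul_sum, smul_smul, inv_mul_cancel₀ D.lam_ne, one_smul]
  have step2 : ∀ j, D.EM (D.e1 * D.zb j) * theta D z (D.wb j)
      = theta D z (D.EM (D.e1 * D.zb j) * D.wb j) := fun j =>
    (theta_left D hzc (D.hEM_mem _ (mul_mem D.he1_mem (D.hzb j).1)) (D.hwb j).1).symm
  simp only [step2]
  rw [← theta_sum, D.hdualA1 D.e1 D.he1_mem, theta_e1 D hzc]

end D2S

open D2

/-- the bilinear form `⟨a, b⟩ = λ⁻² T(a e₂ e₁ w b)` (`a ∈ A`, `b ∈ B`)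
is non-degenerate. -/
theorem stmt8 {k : Type*} [Field k] {R : Type*} [Ring R] [Algebra k R] (D : D2S k R) :
    (∀ a ∈ D.toD2.A,
      (∀ b ∈ D.toD2.B, D.lam⁻¹ ^ 2 * D.T (a * D.e2 * D.e1 * D.w * b) = 0) → a = 0) ∧
    (∀ b ∈ D.toD2.B,
      (∀ a ∈ D.toD2.A, D.lam⁻¹ ^ 2 * D.T (a * D.e2 * D.e1 * D.w * b) = 0) → b = 0) := by
  have hpow : (D.lam⁻¹) ^ 2 ≠ 0 := pow_ne_zero _ (inv_ne_zero D.lam_ne)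
  constructor
  · -- the form is non-degenerate on the `A` side
    intro a ha hyp
    have ha' : a ∈ D.M1 ⊓ Subalgebra.centralizer k (D.N : Set R) := ha
    obtain ⟨ha1, hac⟩ := Algebra.mem_inf.mp ha'
    have hacomm : ∀ y ∈ D.N, y * a = a * y := (Subalgebra.mem_centralizer_iff k).mp hac
    -- Step 1: `T(a z p) = 0` for every `z ∈ A`, via the element `b_z ∈ B`
    have step1 : ∀ z : R, (∀ y ∈ D.N, y * z = z * y) → z ∈ D.M1 →
        D.T (a * (z * D.pw)) = 0 := by
      intro z hzc hz1
      have hbzB := D2S.bz_mem_B D hzc hz1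
      have h := hyp _ hbzB
      have hT0 : D.T (a * D.e2 * D.e1 * D.w * D2S.bz D z) = 0 := by
        rcases mul_eq_zero.mp h with h' | h'
        · exact absurd h' hpow
        · exact h'
      have hbzc := D2S.bz_comm D hzc hz1
      have key : a * D.e2 * D.e1 * D.w * D2S.bz D z
          = a * ((D.e2 * (D.e1 * D2S.bz D z)) * D.pw) := by
        calc a * D.e2 * D.e1 * D.w * D2S.bz D z
            = a * (D.e2 * ((D.e1 * D.w) * D2S.bz D z)) := by simp only [mul_assoc]
          _ = a * (D.e2 * ((D.e1 * D.pw) * D2S.bz D z)) := by rw [D2S.e1_mul_w]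
          _ = a * (D.e2 * (D.e1 * (D.pw * D2S.bz D z))) := by simp only [mul_assoc]
          _ = a * (D.e2 * (D.e1 * (D2S.bz D z * D.pw))) := by
              rw [hbzc _ (D2S.pw_mem D)]
          _ = a * ((D.e2 * (D.e1 * D2S.bz D z)) * D.pw) := by simp only [mul_assoc]
      rw [key] at hT0
      have hEM1eq : D.EM1 (a * ((D.e2 * (D.e1 * D2S.bz D z)) * D.pw)) = a * (z * D.pw) := by
        rw [D.hEM1_left a ha1, D.hEM1_right _ (D.hMM1 (D2S.pw_mem D)),
          D2S.EM1_e2_e1_bz D hzc hz1]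
      calc D.T (a * (z * D.pw))
          = D.T (D.EM1 (a * ((D.e2 * (D.e1 * D2S.bz D z)) * D.pw))) := by rw [hEM1eq]
        _ = D.T (a * ((D.e2 * (D.e1 * D2S.bz D z)) * D.pw)) := D.hTEM1 _
        _ = 0 := hT0
    -- Step 2: `T(a z) = 0` for every `z ∈ A`
    have step2 : ∀ z : R, (∀ y ∈ D.N, y * z = z * y) → z ∈ D.M1 → D.T (a * z) = 0 := by
      intro z hzc hz1
      have hc : ∀ y ∈ D.N, y * (z * D.qw) = (z * D.qw) * y := by
        intro y hy
        calc y * (z * D.qw) = (y * z) * D.qw := (mul_assoc _ _ _).symm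
          _ = (z * y) * D.qw := by rw [hzc y hy]
          _ = z * (y * D.qw) := mul_assoc _ _ _
          _ = z * (D.qw * y) := by rw [D2S.qw_N_comm D y hy]
          _ = (z * D.qw) * y := (mul_assoc _ _ _).symm
      have h1 := step1 (z * D.qw) hc (mul_mem hz1 (D.hMM1 (D2S.qw_mem D)))
      have h2 : (z * D.qw) * D.pw = z := by rw [mul_assoc, D2S.qw_mul_pw, mul_one]
      rwa [h2] at h1
    -- Step 3: conclude `a = 0` using the dual bases of `EM` and non-degeneracy on `U`
    have hu0 : ∀ j, D.EM (a * D.zb j) = 0 := by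
      intro j
      have hazb : a * D.zb j ∈ D.M1 := mul_mem ha1 (D.hzb j).1
      refine D.hU_nondeg _ (D.hEM_mem _ hazb) ?_ ?_
      · intro y hy
        have hyM := D.hNM hy
        calc D.EM (a * D.zb j) * y
            = D.EM ((a * D.zb j) * y) := (D.hEM_right y hyM _ hazb).symm
          _ = D.EM (y * (a * D.zb j)) := by
              congr 1
              calc (a * D.zb j) * y = a * (D.zb j * y) := mul_assoc _ _ _
                _ = a * (y * D.zb j) := by rw [(D.hzb j).2 y hy]
                _ = (a * y) * D.zb j := (mul_assoc _ _ _).symm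
                _ = (y * a) * D.zb j := by rw [← hacomm y hy]
                _ = y * (a * D.zb j) := mul_assoc _ _ _
          _ = y * D.EM (a * D.zb j) := D.hEM_left y hyM _ hazb
      · intro u' hu'M hu'c
        have hz1 : D.zb j * u' ∈ D.M1 := mul_mem (D.hzb j).1 (D.hMM1 hu'M)
        have hzc : ∀ y ∈ D.N, y * (D.zb j * u') = (D.zb j * u') * y := by
          intro y hy
          calc y * (D.zb j * u') = (y * D.zb j) * u' := (mul_assoc _ _ _).symm
            _ = (D.zb j * y) * u' := by rw [← (D.hzb j).2 y hy]
            _ = D.zb j * (y * u') := mul_assoc _ _ _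
            _ = D.zb j * (u' * y) := by rw [← hu'c y hy]
            _ = (D.zb j * u') * y := (mul_assoc _ _ _).symm
        calc D.T (D.EM (a * D.zb j) * u')
            = D.T (D.EM ((a * D.zb j) * u')) := by rw [D.hEM_right u' hu'M _ hazb]
          _ = D.T ((a * D.zb j) * u') := D.hTEM _ (mul_mem hazb (D.hMM1 hu'M))
          _ = D.T (a * (D.zb j * u')) := by rw [mul_assoc]
          _ = 0 := step2 _ hzc hz1
    calc a = ∑ j, D.EM (a * D.zb j) * D.wb j := (D.hdualA1 a ha1).symm
      _ = 0 := by simp [hu0]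
  · -- the form is non-degenerate on the `B` side
    intro b hb hyp
    have hb' : b ∈ Subalgebra.centralizer k (D.M : Set R) := hb
    have hbc : ∀ g ∈ D.M, g * b = b * g := (Subalgebra.mem_centralizer_iff k).mp hb'
    set Y1 := D.EM1 (D.e2 * (D.e1 * (D.w * b))) with hY1def
    have hY1M1 : Y1 ∈ D.M1 := D.hEM1_mem _
    have hY1c : ∀ y ∈ D.N, y * Y1 = Y1 * y := by
      intro y hy
      have hyM := D.hNM hy
      have hyM1 := D.hMM1 hyM
      calc y * Y1 = D.EM1 (y * (D.e2 * (D.e1 * (D.w * b)))) := (D.hEM1_left y hyM1 _).symm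
        _ = D.EM1 ((D.e2 * (D.e1 * (D.w * b))) * y) := by
            congr 1
            calc y * (D.e2 * (D.e1 * (D.w * b)))
                = (y * D.e2) * (D.e1 * (D.w * b)) := (mul_assoc _ _ _).symm
              _ = (D.e2 * y) * (D.e1 * (D.w * b)) := by rw [← D.he2_M y hyM]
              _ = D.e2 * ((y * D.e1) * (D.w * b)) := by simp only [mul_assoc]
              _ = D.e2 * ((D.e1 * y) * (D.w * b)) := by rw [← D.he1_N y hy]
              _ = D.e2 * (D.e1 * ((y * D.w) * b)) := by simp only [mul_assoc]
              _ = D.e2 * (D.e1 * ((D.w * y) * b)) := by rw [← D.hw_mem.2 y hyM]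
              _ = D.e2 * (D.e1 * (D.w * (y * b))) := by simp only [mul_assoc]
              _ = D.e2 * (D.e1 * (D.w * (b * y))) := by rw [hbc y hyM]
              _ = (D.e2 * (D.e1 * (D.w * b))) * y := by simp only [mul_assoc]
        _ = Y1 * y := D.hEM1_right y hyM1 _
    have hTzY : ∀ z : R, z ∈ D.M1 → (∀ y ∈ D.N, y * z = z * y) → D.T (z * Y1) = 0 := by
      intro z hz1 hzc
      have hzA : z ∈ D.toD2.A := by
        have : z ∈ D.M1 ⊓ Subalgebra.centralizer k (D.N : Set R) :=
          Algebra.mem_inf.mpr ⟨hz1, (Subalgebra.mem_centralizer_iff k).mpr hzc⟩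
        exact this
      have h := hyp z hzA
      have hT0 : D.T (z * D.e2 * D.e1 * D.w * b) = 0 := by
        rcases mul_eq_zero.mp h with h' | h'
        · exact absurd h' hpow
        · exact h'
      calc D.T (z * Y1)
          = D.T (D.EM1 (z * (D.e2 * (D.e1 * (D.w * b))))) := by rw [D.hEM1_left z hz1]
        _ = D.T (z * (D.e2 * (D.e1 * (D.w * b)))) := D.hTEM1 _
        _ = D.T (z * D.e2 * D.e1 * D.w * b) := by simp only [mul_assoc]
        _ = 0 := hT0
    have hY10 : Y1 = 0 := by
      have hu0 : ∀ j, D.EM (D.wb j * Y1) = 0 := by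
        intro j
        have hwY : D.wb j * Y1 ∈ D.M1 := mul_mem (D.hwb j).1 hY1M1
        refine D.hU_nondeg _ (D.hEM_mem _ hwY) ?_ ?_
        · intro y hy
          have hyM := D.hNM hy
          calc D.EM (D.wb j * Y1) * y
              = D.EM ((D.wb j * Y1) * y) := (D.hEM_right y hyM _ hwY).symm
            _ = D.EM (y * (D.wb j * Y1)) := by
                congr 1
                calc (D.wb j * Y1) * y = D.wb j * (Y1 * y) := mul_assoc _ _ _
                  _ = D.wb j * (y * Y1) := by rw [← hY1c y hy]
                  _ = (D.wb j * y) * Y1 := (mul_assoc _ _ _).symm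
                  _ = (y * D.wb j) * Y1 := by rw [(D.hwb j).2 y hy]
                  _ = y * (D.wb j * Y1) := mul_assoc _ _ _
            _ = y * D.EM (D.wb j * Y1) := D.hEM_left y hyM _ hwY
        · intro u' hu'M hu'c
          have hz1 : u' * D.wb j ∈ D.M1 := mul_mem (D.hMM1 hu'M) (D.hwb j).1
          have hzc : ∀ y ∈ D.N, y * (u' * D.wb j) = (u' * D.wb j) * y := by
            intro y hy
            calc y * (u' * D.wb j) = (y * u') * D.wb j := (mul_assoc _ _ _).symm
              _ = (u' * y) * D.wb j := by rw [← hu'c y hy]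
              _ = u' * (y * D.wb j) := mul_assoc _ _ _
              _ = u' * (D.wb j * y) := by rw [← (D.hwb j).2 y hy]
              _ = (u' * D.wb j) * y := (mul_assoc _ _ _).symm
          calc D.T (D.EM (D.wb j * Y1) * u')
              = D.T (D.EM ((D.wb j * Y1) * u')) := by rw [D.hEM_right u' hu'M _ hwY]
            _ = D.T ((D.wb j * Y1) * u') := D.hTEM _ (mul_mem hwY (D.hMM1 hu'M))
            _ = D.T (D.wb j * (Y1 * u')) := by rw [mul_assoc]
            _ = D.T ((Y1 * u') * D.wb j) := D.hT_tr _ _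
            _ = D.T (Y1 * (u' * D.wb j)) := by rw [mul_assoc]
            _ = D.T ((u' * D.wb j) * Y1) := D.hT_tr _ _
            _ = 0 := hTzY _ hz1 hzc
      calc Y1 = ∑ j, D.zb j * D.EM (D.wb j * Y1) := (D.hdualA2 Y1 hY1M1).symm
        _ = 0 := by simp [hu0]
    have he2e1wb : D.e2 * (D.e1 * (D.w * b)) = 0 := by
      have h := D.hPP2' (D.e1 * (D.w * b))
      rw [← hY1def] at h
      rw [h, hY10, mul_zero, smul_zero]
    have he1wb : D.e1 * (D.w * b) = 0 := by
      have h2 : D.e1 * (D.e2 * (D.e1 * (D.w * b))) = D.lam • (D.e1 * (D.w * b)) := by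
        calc D.e1 * (D.e2 * (D.e1 * (D.w * b)))
            = (D.e1 * D.e2 * D.e1) * (D.w * b) := by simp only [mul_assoc]
          _ = (D.lam • D.e1) * (D.w * b) := by rw [D.hbraid1]
          _ = D.lam • (D.e1 * (D.w * b)) := smul_mul_assoc _ _ _
      have h3 : D.lam • (D.e1 * (D.w * b)) = 0 := by rw [← h2, he2e1wb, mul_zero]
      rcases smul_eq_zero.mp h3 with h' | h'
      · exact absurd h' D.lam_ne
      · exact h'
    have he1b : D.e1 * b = 0 := by
      have h1 : D.e1 * (D.w * b) = (D.e1 * b) * D.pw := by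
        calc D.e1 * (D.w * b) = (D.e1 * D.w) * b := (mul_assoc _ _ _).symm
          _ = (D.e1 * D.pw) * b := by rw [D2S.e1_mul_w]
          _ = D.e1 * (D.pw * b) := mul_assoc _ _ _
          _ = D.e1 * (b * D.pw) := by rw [hbc _ (D2S.pw_mem D)]
          _ = (D.e1 * b) * D.pw := (mul_assoc _ _ _).symm
      have h2 : (D.e1 * b) * D.pw = 0 := by rw [← h1, he1wb]
      calc D.e1 * b = (D.e1 * b) * (D.pw * D.qw) := by rw [D2S.pw_mul_qw, mul_one]
        _ = ((D.e1 * b) * D.pw) * D.qw := (mul_assoc _ _ _).symm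
        _ = 0 := by rw [h2, zero_mul]
    have hXb : ∀ X ∈ D.M1, X * b = 0 := by
      intro X hX
      have hX' : X ∈ Submodule.span k {x : R | ∃ m ∈ D.M, ∃ m' ∈ D.M, x = m * D.e1 * m'} := by
        rw [← D.hM1_gen]
        exact hX
      clear hX
      induction hX' using Submodule.span_induction with
      | mem x hx =>
        obtain ⟨m, hm, m', hm', rfl⟩ := hx
        calc (m * D.e1 * m') * b = m * (D.e1 * (m' * b)) := by simp only [mul_assoc]
          _ = m * (D.e1 * (b * m')) := by rw [hbc m' hm']
          _ = m * ((D.e1 * b) * m') := by rw [← mul_assoc D.e1]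
          _ = 0 := by rw [he1b, zero_mul, mul_zero]
      | zero => rw [zero_mul]
      | add x y hx hy ihx ihy => rw [add_mul, ihx, ihy, add_zero]
      | smul c x hx ih => rw [smul_mul_assoc, ih, smul_zero]
    have h1 := hXb 1 (one_mem D.M1)
    rwa [one_mul] at h1
end

section
/- For all b ∈ B: ε(b) = λ⁻¹ T(e₂ w b); ε(S(b)) = ε(b); and Δ(1) = S⁻¹(f⁽¹⁾) ⊗ f⁽²⁾. -/
open scoped TensorProduct
open TensorProduct

/-- Extension of the depth two setting by the comultiplication `Δ`, the counit
(given by `ε(b) = ⟨1, b⟩`) and the antipode `S` on `B = C_{M₂}(M)`, characterized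
through the non-degenerate pairing `⟨a, b⟩ = λ⁻² T(a e₂ e₁ w b)` of `A` and `B`. -/
structure D2H (k : Type*) [Field k] (R : Type*) [Ring R] [Algebra k R] extends D2S k R where
  Δ : R →ₗ[k] R ⊗[k] R
  S : R →ₗ[k] R
  hΔ_mem : ∀ b, (∀ y ∈ M, b * y = y * b) →
      Δ b ∈ Submodule.span k {z : R ⊗[k] R |
        ∃ b1, (∀ y ∈ M, b1 * y = y * b1) ∧ ∃ b2, (∀ y ∈ M, b2 * y = y * b2) ∧
          z = b1 ⊗ₜ[k] b2}
  hΔ_def : ∀ a1 ∈ M1, (∀ y ∈ N, a1 * y = y * a1) →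
    ∀ a2 ∈ M1, (∀ y ∈ N, a2 * y = y * a2) →
    ∀ b, (∀ y ∈ M, b * y = y * b) →
    ∀ (m : ℕ) (b1 b2 : Fin m → R), Δ b = ∑ i, b1 i ⊗ₜ[k] b2 i →
      ∑ i, (lam⁻¹ ^ 2 * T (a1 * e2 * e1 * w * b1 i)) *
          (lam⁻¹ ^ 2 * T (a2 * e2 * e1 * w * b2 i))
        = lam⁻¹ ^ 2 * T (a1 * a2 * e2 * e1 * w * b)
  hS_mem : ∀ b, (∀ y ∈ M, b * y = y * b) → ∀ y ∈ M, S b * y = y * S b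
  hS_bijOn : Set.BijOn S {b : R | ∀ y ∈ M, b * y = y * b} {b : R | ∀ y ∈ M, b * y = y * b}
  hS_def : ∀ a ∈ M1, (∀ y ∈ N, a * y = y * a) →
    ∀ b, (∀ y ∈ M, b * y = y * b) →
      lam⁻¹ ^ 2 * T (a * e2 * e1 * w * b) = lam⁻¹ ^ 2 * T (S b * e1 * e2 * w * a)

namespace D2H

variable {k : Type*} [Field k] {R : Type*} [Ring R] [Algebra k R]

/-- The duality pairing `⟨a, b⟩ = λ⁻² T(a e₂ e₁ w b)`. -/
def pr (D : D2H k R) (a b : R) : k := D.lam⁻¹ ^ 2 * D.T (a * D.e2 * D.e1 * D.w * b)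

/-- The counit `ε(b) = ⟨1, b⟩`. -/
def eps (D : D2H k R) (b : R) : k := D.pr 1 b

end D2H

open D2 D2H

section Aux

variable {k : Type*} [Field k] {R : Type*} [Ring R] [Algebra k R] (D : D2H k R)

lemma lam_inv_mul : D.lam⁻¹ * D.lam = 1 := inv_mul_cancel₀ D.lam_ne

lemma lam_mul_inv : D.lam * D.lam⁻¹ = 1 := mul_inv_cancel₀ D.lam_ne

lemma tr (x y : R) : D.T (x * y) = D.T (y * x) := D.hT_tr x y

lemma Tsmul (c : k) (x : R) : D.T (c • x) = c * D.T x := by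
  rw [map_smul, smul_eq_mul]

/-- `∑ xᵢ e₁ yᵢ = 1` in `M₁`. -/
lemma L1 : ∑ i, D.xb i * D.e1 * D.yb i = 1 := by
  set u : R := ∑ i, D.xb i * D.e1 * D.yb i with hu
  have hfix : ∀ z ∈ Submodule.span k {z : R | ∃ m ∈ D.M, ∃ m' ∈ D.M, z = m * D.e1 * m'},
      u * z = z := by
    intro z hz
    induction hz using Submodule.span_induction with
    | mem z hz =>
        obtain ⟨m, hm, m', hm', rfl⟩ := hz
        rw [hu, Finset.sum_mul]
        have : ∀ i, D.xb i * D.e1 * D.yb i * (m * D.e1 * m')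
            = D.xb i * D.E (D.yb i * m) * D.e1 * m' := by
          intro i
          have h1 : D.xb i * D.e1 * D.yb i * (m * D.e1 * m')
              = D.xb i * (D.e1 * (D.yb i * m) * D.e1) * m' := by
            simp only [mul_assoc]
          rw [h1, D.he1_jones _ (D.M.mul_mem (D.hyb i) hm),
            D.he1_jones' _ (D.M.mul_mem (D.hyb i) hm)]
          simp only [mul_assoc]
        rw [Finset.sum_congr rfl fun i _ => this i]
        have h2 : ∑ i, D.xb i * D.E (D.yb i * m) * D.e1 * m'
            = (∑ i, D.xb i * D.E (D.yb i * m)) * D.e1 * m' := by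
          rw [Finset.sum_mul, Finset.sum_mul]
        rw [h2, D.hdual2 m hm]
    | zero => simp
    | add x y _ _ hx hy => rw [mul_add, hx, hy]
    | smul c x _ hx => rw [mul_smul_comm, hx]
  have h1 : (1 : R) ∈ Submodule.span k {z : R | ∃ m ∈ D.M, ∃ m' ∈ D.M, z = m * D.e1 * m'} := by
    rw [← D.hM1_gen]; exact D.M1.one_mem
  have := hfix 1 h1
  rwa [mul_one] at this

lemma Tme1m : ∀ m ∈ D.M, ∀ m' ∈ D.M, D.T (m * D.e1 * m') = D.lam * D.T (m * m') := by
  intro m hm m' hm'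
  have hmem : m * D.e1 * m' ∈ D.M1 :=
    D.M1.mul_mem (D.M1.mul_mem (D.hMM1 hm) D.he1_mem) (D.hMM1 hm')
  rw [← D.hTEM _ hmem, D.hEM_e1 m hm m' hm', Tsmul]

lemma Te2xy : ∀ x ∈ D.M1, ∀ y ∈ D.M1, D.T (x * D.e2 * y) = D.lam * D.T (x * y) := by
  intro x hx y hy
  rw [← D.hTEM1 (x * D.e2 * y), D.hEM1_e2 x hx y hy, Tsmul]

/-- Markov property of the trace on the commutant of `M`. -/
lemma Tstar (b : R) (hb : ∀ m ∈ D.M, b * m = m * b) : D.T (b * D.e1) = D.lam * D.T b := by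
  have h0 : D.T b = D.lam⁻¹ * D.T (b * D.e1) := by
    calc D.T b = D.T (b * 1) := by rw [mul_one]
    _ = D.T (b * ∑ i, D.xb i * D.e1 * D.yb i) := by rw [L1]
    _ = ∑ i, D.T (b * (D.xb i * D.e1 * D.yb i)) := by rw [Finset.mul_sum, map_sum]
    _ = ∑ i, D.T (b * (D.yb i * D.xb i) * D.e1) := by
        refine Finset.sum_congr rfl fun i _ => ?_
        have h1 : b * (D.xb i * D.e1 * D.yb i) = b * D.xb i * D.e1 * D.yb i := by
          simp only [mul_assoc]
        rw [h1, tr, ← mul_assoc, ← mul_assoc, ← hb _ (D.hyb i)]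
        simp only [mul_assoc]
    _ = D.T (b * (∑ i, D.yb i * D.xb i) * D.e1) := by
        rw [Finset.mul_sum, Finset.sum_mul, map_sum]
    _ = D.lam⁻¹ * D.T (b * D.e1) := by
        rw [D.hindex', mul_smul_comm, smul_mul_assoc, Tsmul, mul_one]
  rw [h0, ← mul_assoc, lam_mul_inv, one_mul]

end Aux
section Aux2

variable {k : Type*} [Field k] {R : Type*} [Ring R] [Algebra k R] (D : D2H k R)

/-- commutes with `M` -/
def CM (x : R) : Prop := ∀ m ∈ D.M, x * m = m * x

lemma CM_mul {x y : R} (hx : CM D x) (hy : CM D y) : CM D (x * y) := by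
  intro m hm
  rw [mul_assoc, hy m hm, ← mul_assoc, hx m hm, mul_assoc]

lemma CM_e2 : CM D D.e2 := fun m hm => D.he2_M m hm

lemma CM_w : CM D D.w := D.hw_mem.2

lemma CM_winv : CM D D.winv := D.hwinv_mem.2

lemma CM_f1 (i : Fin D.nV) : CM D (D.f1 i) := (D.hf1 i).2

lemma CM_f2 (i : Fin D.nV) : CM D (D.f2 i) := (D.hf2 i).2

lemma CM_EM1 {x : R} (hx : CM D x) : CM D (D.EM1 x) := by
  intro m hm
  rw [← D.hEM1_right m (D.hMM1 hm) x, hx m hm, D.hEM1_left m (D.hMM1 hm) x]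

/-- `L(x) = λ⁻¹ E_M(e₁ x)`. -/
noncomputable def Ll (x : R) : R := D.lam⁻¹ • D.EM (D.e1 * x)

/-- `R(x) = λ⁻¹ E_M(x e₁)`. -/
noncomputable def Rr (x : R) : R := D.lam⁻¹ • D.EM (x * D.e1)

lemma e1_mul (x : R) (hx : x ∈ D.M1) : D.e1 * x = D.e1 * Ll D x := by
  rw [Ll, mul_smul_comm]; exact D.hPP1' x hx

lemma mul_e1 (x : R) (hx : x ∈ D.M1) : x * D.e1 = Rr D x * D.e1 := by
  rw [Rr, smul_mul_assoc]; exact D.hPP1 x hx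

lemma Ll_mem (x : R) (hx : x ∈ D.M1) : Ll D x ∈ D.M :=
  D.M.smul_mem (D.hEM_mem _ (D.M1.mul_mem D.he1_mem hx)) _

lemma Rr_mem (x : R) (hx : x ∈ D.M1) : Rr D x ∈ D.M :=
  D.M.smul_mem (D.hEM_mem _ (D.M1.mul_mem hx D.he1_mem)) _

lemma Ll_commN (x : R) (hx : x ∈ D.M1) (hc : CM D x) :
    ∀ n ∈ D.N, Ll D x * n = n * Ll D x := by
  intro n hn
  have hnM : n ∈ D.M := D.hNM hn
  have harg : (D.e1 * x) * n = n * (D.e1 * x) := by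
    rw [mul_assoc, hc n hnM, ← mul_assoc, D.he1_N n hn, mul_assoc]
  rw [Ll, smul_mul_assoc, mul_smul_comm,
    ← D.hEM_right n hnM _ (D.M1.mul_mem D.he1_mem hx), harg,
    D.hEM_left n hnM _ (D.M1.mul_mem D.he1_mem hx)]

lemma Rr_commN (x : R) (hx : x ∈ D.M1) (hc : ∀ n ∈ D.N, x * n = n * x) :
    ∀ n ∈ D.N, Rr D x * n = n * Rr D x := by
  intro n hn
  have hnM : n ∈ D.M := D.hNM hn
  have harg : (x * D.e1) * n = n * (x * D.e1) := by
    rw [mul_assoc, D.he1_N n hn, ← mul_assoc, hc n hn, mul_assoc]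
  rw [Rr, smul_mul_assoc, mul_smul_comm,
    ← D.hEM_right n hnM _ (D.M1.mul_mem hx D.he1_mem), harg,
    D.hEM_left n hnM _ (D.M1.mul_mem hx D.he1_mem)]

/-- `T(e₂ e₁ w b) = λ T(e₂ w b)` for `b` in the centralizer of `M`. -/
lemma key1 (b : R) (hb : CM D b) :
    D.T (D.e2 * D.e1 * D.w * b) = D.lam * D.T (D.e2 * D.w * b) := by
  set v : R := D.EM1 (b * D.e2) with hv
  have hvc : CM D v := CM_EM1 D (CM_mul D hb (CM_e2 D))
  have hwv : CM D (D.w * v) := CM_mul D (CM_w D) hvc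
  have e1w : D.e1 * D.w ∈ D.M1 := D.M1.mul_mem D.he1_mem D.hw_mem.1
  calc D.T (D.e2 * D.e1 * D.w * b) = D.T (D.e2 * (D.e1 * (D.w * b))) := by
        simp only [mul_assoc]
    _ = D.T ((D.e1 * (D.w * b)) * D.e2) := tr D _ _
    _ = D.T (D.EM1 ((D.e1 * D.w) * (b * D.e2))) := by
        rw [D.hTEM1]; congr 1; simp only [mul_assoc]
    _ = D.T ((D.e1 * D.w) * v) := by rw [D.hEM1_left _ e1w]
    _ = D.T ((D.w * v) * D.e1) := by rw [mul_assoc, tr]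
    _ = D.lam * D.T (D.w * v) := Tstar D _ hwv
    _ = D.lam * D.T (D.EM1 (D.w * (b * D.e2))) := by rw [D.hEM1_left _ D.hw_mem.1]
    _ = D.lam * D.T (D.w * (b * D.e2)) := by rw [D.hTEM1]
    _ = D.lam * D.T (D.e2 * D.w * b) := by rw [← mul_assoc, tr, ← mul_assoc]

/-- `T(e₁ e₂ w b) = λ T(e₂ w b)` for `b` in the centralizer of `M`. -/
lemma key2 (b : R) (hb : CM D b) :
    D.T (D.e1 * D.e2 * D.w * b) = D.lam * D.T (D.e2 * D.w * b) := by
  set t : R := D.EM1 (D.e2 * (D.w * b)) with ht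
  have htc : CM D t := CM_EM1 D (CM_mul D (CM_e2 D) (CM_mul D (CM_w D) hb))
  calc D.T (D.e1 * D.e2 * D.w * b) = D.T (D.e1 * (D.e2 * (D.w * b))) := by
        simp only [mul_assoc]
    _ = D.T (D.EM1 (D.e1 * (D.e2 * (D.w * b)))) := (D.hTEM1 _).symm
    _ = D.T (D.e1 * t) := by rw [D.hEM1_left _ D.he1_mem]
    _ = D.T (t * D.e1) := tr D _ _
    _ = D.lam * D.T t := Tstar D _ htc
    _ = D.lam * D.T (D.e2 * (D.w * b)) := by rw [ht, D.hTEM1]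
    _ = D.lam * D.T (D.e2 * D.w * b) := by rw [← mul_assoc]

lemma part1 (b : R) (hb : CM D b) :
    D.eps b = D.lam⁻¹ * D.T (D.e2 * D.w * b) := by
  rw [eps, pr, one_mul, key1 D b hb, pow_two]
  rw [← mul_assoc, mul_assoc _ _ D.lam, lam_inv_mul, mul_one]

lemma part2 (b : R) (hb : CM D b) :
    D.eps (D.S b) = D.eps b := by
  have hSb : CM D (D.S b) := D.hS_mem b hb
  have hL : D.eps (D.S b) = D.lam⁻¹ ^ 2 * (D.lam * D.T (D.e2 * D.w * D.S b)) := by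
    rw [eps, pr, one_mul, key1 D _ hSb]
  have hR : D.eps b = D.lam⁻¹ ^ 2 * (D.lam * D.T (D.e2 * D.w * D.S b)) := by
    have h1 : D.eps b = D.lam⁻¹ ^ 2 * D.T (D.S b * D.e1 * D.e2 * D.w * 1) := by
      rw [eps, pr]
      exact D.hS_def 1 D.M1.one_mem (fun y _ => by rw [one_mul, mul_one]) b hb
    rw [h1, mul_one,
      show D.S b * D.e1 * D.e2 * D.w = D.S b * (D.e1 * (D.e2 * D.w)) by simp only [mul_assoc],
      tr,
      show D.e1 * (D.e2 * D.w) * D.S b = D.e1 * D.e2 * D.w * D.S b by simp only [mul_assoc],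
      key2 D _ hSb]
  exact hL.trans hR.symm

end Aux2
section Aux3

variable {k : Type*} [Field k] {R : Type*} [Ring R] [Algebra k R] (D : D2H k R)

lemma gamC (u : R) (huM : u ∈ D.M) (huN : ∀ n ∈ D.N, u * n = n * u)
    (m : R) (hm : m ∈ D.M) :
    ∑ i, m * D.xb i * u * D.e1 * D.yb i = ∑ j, D.xb j * D.e1 * (u * (D.yb j * m)) := by
  have step1 : ∀ i : Fin D.nE, m * D.xb i * u * D.e1 * D.yb i
      = ∑ j, D.xb j * D.e1 * (D.E (D.yb j * (m * D.xb i * u)) * D.yb i) := by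
    intro i
    have hmem : m * D.xb i * u ∈ D.M := D.M.mul_mem (D.M.mul_mem hm (D.hxb i)) huM
    conv_lhs => rw [← D.hdual2 _ hmem]
    rw [Finset.sum_mul, Finset.sum_mul]
    refine Finset.sum_congr rfl fun j _ => ?_
    have hc : D.yb j * (m * D.xb i * u) ∈ D.M := D.M.mul_mem (D.hyb j) hmem
    calc D.xb j * D.E (D.yb j * (m * D.xb i * u)) * D.e1 * D.yb i
        = D.xb j * (D.E (D.yb j * (m * D.xb i * u)) * D.e1) * D.yb i := by
          simp only [mul_assoc]
      _ = D.xb j * (D.e1 * D.E (D.yb j * (m * D.xb i * u))) * D.yb i := by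
          rw [D.he1_jones' _ hc]
      _ = D.xb j * D.e1 * (D.E (D.yb j * (m * D.xb i * u)) * D.yb i) := by
          simp only [mul_assoc]
  rw [Finset.sum_congr rfl fun i _ => step1 i, Finset.sum_comm]
  refine Finset.sum_congr rfl fun j _ => ?_
  rw [← Finset.mul_sum]
  congr 1
  calc ∑ i, D.E (D.yb j * (m * D.xb i * u)) * D.yb i
      = ∑ i, D.E ((u * (D.yb j * m)) * D.xb i) * D.yb i := by
        refine Finset.sum_congr rfl fun i _ => ?_
        congr 1
        have hz : (D.yb j * m) * D.xb i ∈ D.M :=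
          D.M.mul_mem (D.M.mul_mem (D.hyb j) hm) (D.hxb i)
        have h1 : D.yb j * (m * D.xb i * u) = ((D.yb j * m) * D.xb i) * u := by
          simp only [mul_assoc]
        have h2 : u * ((D.yb j * m) * D.xb i) = (u * (D.yb j * m)) * D.xb i := by
          simp only [mul_assoc]
        rw [h1, ← D.hsymm u huM huN _ hz, h2]
    _ = u * (D.yb j * m) :=
        D.hdual1 _ (D.M.mul_mem huM (D.M.mul_mem (D.hyb j) hm))

/-- `γ(u) = λ⁻¹ ∑ xᵢ u e₁ yᵢ`. -/
noncomputable def Gam (u : R) : R := D.lam⁻¹ • ∑ i, D.xb i * u * D.e1 * D.yb i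

lemma Gam_mem (u : R) (huM : u ∈ D.M) : Gam D u ∈ D.M1 := by
  refine D.M1.smul_mem (sum_mem fun i _ => ?_) _
  exact D.M1.mul_mem (D.M1.mul_mem (D.M1.mul_mem (D.hMM1 (D.hxb i)) (D.hMM1 huM))
    D.he1_mem) (D.hMM1 (D.hyb i))

lemma Gam_comm (u : R) (huM : u ∈ D.M) (huN : ∀ n ∈ D.N, u * n = n * u) :
    CM D (Gam D u) := by
  intro m hm
  rw [Gam, smul_mul_assoc, mul_smul_comm]
  congr 1
  rw [Finset.sum_mul, Finset.mul_sum]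
  have hL : ∀ i : Fin D.nE, m * (D.xb i * u * D.e1 * D.yb i)
      = m * D.xb i * u * D.e1 * D.yb i := by intro i; simp only [mul_assoc]
  rw [Finset.sum_congr rfl fun i _ => hL i, gamC D u huM huN m hm]
  have h1 : ∑ i, D.xb i * u * D.e1 * D.yb i = ∑ j, D.xb j * D.e1 * (u * D.yb j) := by
    have := gamC D u huM huN 1 D.M.one_mem
    simpa only [one_mul, mul_one] using this
  rw [Finset.sum_congr rfl fun i (_ : i ∈ Finset.univ) =>
    congrArg (· * m) (by rw [] : D.xb i * u * D.e1 * D.yb i = D.xb i * u * D.e1 * D.yb i)]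
  calc ∑ i, D.xb i * u * D.e1 * D.yb i * m
      = (∑ i, D.xb i * u * D.e1 * D.yb i) * m := by rw [Finset.sum_mul]
    _ = (∑ j, D.xb j * D.e1 * (u * D.yb j)) * m := by rw [h1]
    _ = ∑ j, D.xb j * D.e1 * (u * (D.yb j * m)) := by
        rw [Finset.sum_mul]
        exact Finset.sum_congr rfl fun j _ => by simp only [mul_assoc]

lemma EMGam (u : R) (huM : u ∈ D.M) (huN : ∀ n ∈ D.N, u * n = n * u) :
    D.EM (Gam D u * D.e1) = u := by
  rw [Gam, smul_mul_assoc, map_smul, Finset.sum_mul, map_sum]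
  have step : ∀ i : Fin D.nE, D.EM (D.xb i * u * D.e1 * D.yb i * D.e1)
      = D.lam • (D.xb i * D.E (D.yb i) * u) := by
    intro i
    have hyM : D.yb i ∈ D.M := D.hyb i
    have hEy : D.E (D.yb i) ∈ D.M := D.hNM (D.hE_mem _ hyM)
    have h1 : D.xb i * u * D.e1 * D.yb i * D.e1 = D.xb i * u * (D.e1 * D.yb i * D.e1) := by
      simp only [mul_assoc]
    rw [h1, D.he1_jones _ hyM, D.he1_jones' _ hyM]
    have h2 : D.xb i * u * (D.E (D.yb i) * D.e1) = (D.xb i * u * D.E (D.yb i)) * D.e1 * 1 := by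
      rw [mul_one]; simp only [mul_assoc]
    rw [h2, D.hEM_e1 _ (D.M.mul_mem (D.M.mul_mem (D.hxb i) huM) hEy) 1 D.M.one_mem, mul_one]
    congr 1
    rw [mul_assoc, huN _ (D.hE_mem _ hyM), ← mul_assoc]
  rw [Finset.sum_congr rfl fun i _ => step i, ← Finset.smul_sum, smul_smul,
    inv_mul_cancel₀ D.lam_ne, one_smul]
  have h3 : ∀ i : Fin D.nE, D.xb i * D.E (D.yb i) * u = D.xb i * D.E (D.yb i * 1) * u := by
    intro i; rw [mul_one]
  rw [Finset.sum_congr rfl fun i _ => h3 i, ← Finset.sum_mul,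
    show ∑ i, D.xb i * D.E (D.yb i * 1) = (1 : R) from D.hdual2 1 D.M.one_mem, one_mul]

lemma TA (v : R) (hv1 : v ∈ D.M1) (hv2 : CM D v) (u : R) (huM : u ∈ D.M) :
    D.T (v * Gam D u) = D.lam⁻¹ * D.T (u * Ll D v) := by
  have hstep : ∀ i : Fin D.nE, D.T (v * (D.xb i * u * D.e1 * D.yb i))
      = D.T ((v * (D.yb i * D.xb i)) * (u * D.e1)) := by
    intro i
    have h1 : v * (D.xb i * u * D.e1 * D.yb i) = (v * (D.xb i * u * D.e1)) * D.yb i := by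
      simp only [mul_assoc]
    rw [h1, tr, ← mul_assoc, ← hv2 _ (D.hyb i)]
    congr 1
    simp only [mul_assoc]
  have h0 : D.T (v * Gam D u) = D.lam⁻¹ * ∑ i, D.T (v * (D.xb i * u * D.e1 * D.yb i)) := by
    rw [Gam, mul_smul_comm, Tsmul, Finset.mul_sum, map_sum]
  rw [h0, Finset.sum_congr rfl fun i _ => hstep i]
  have h2 : ∑ i, D.T ((v * (D.yb i * D.xb i)) * (u * D.e1))
      = D.T ((v * ∑ i, D.yb i * D.xb i) * (u * D.e1)) := by
    rw [Finset.mul_sum, Finset.sum_mul, map_sum]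
  rw [h2, D.hindex', mul_smul_comm, smul_mul_assoc, Tsmul, mul_one]
  have h4 : D.T (v * (u * D.e1)) = D.lam * D.T (u * Ll D v) := by
    rw [tr, mul_assoc, e1_mul D v hv1, ← mul_assoc,
      Tme1m D u huM _ (Ll_mem D v hv1)]
  rw [h4, ← mul_assoc, ← mul_assoc]
  congr 1
  rw [mul_assoc, inv_mul_cancel₀ D.lam_ne, mul_one]

lemma Ustar (u : R) (huM : u ∈ D.M) (huN : ∀ n ∈ D.N, u * n = n * u) :
    ∑ i, D.T (Ll D (D.w * D.f2 i) * u) • Rr D (D.f1 i) = u := by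
  have hG1 : Gam D u ∈ D.M1 := Gam_mem D u huM
  have hG2 : CM D (Gam D u) := Gam_comm D u huM huN
  have h0 := D.hw_dual (Gam D u) hG1 hG2
  have h1 : ∑ i, D.T (Gam D u * (D.w * D.f2 i)) • D.EM (D.f1 i * D.e1)
      = D.EM (Gam D u * D.e1) := by
    conv_rhs => rw [← h0]
    rw [Finset.sum_mul, map_sum]
    exact Finset.sum_congr rfl fun i _ => by rw [smul_mul_assoc, map_smul]
  rw [EMGam D u huM huN] at h1
  have hco : ∀ i : Fin D.nV, D.T (Gam D u * (D.w * D.f2 i))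
      = D.lam⁻¹ * D.T (Ll D (D.w * D.f2 i) * u) := by
    intro i
    have hwf1 : D.w * D.f2 i ∈ D.M1 := D.M1.mul_mem D.hw_mem.1 (D.hf2 i).1
    have hwf2 : CM D (D.w * D.f2 i) := CM_mul D (CM_w D) (CM_f2 D i)
    rw [tr, TA D _ hwf1 hwf2 u huM, tr]
  calc ∑ i, D.T (Ll D (D.w * D.f2 i) * u) • Rr D (D.f1 i)
      = ∑ i, D.T (Gam D u * (D.w * D.f2 i)) • D.EM (D.f1 i * D.e1) :=
        Finset.sum_congr rfl fun i _ => by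
          rw [hco i, Rr, smul_smul, mul_comm]
    _ = u := h1

lemma ARecon (a : R) (ha1 : a ∈ D.M1) (ha2 : ∀ n ∈ D.N, a * n = n * a) :
    a = ∑ j, ∑ i, D.T ((Ll D (D.w * D.f2 i) * D.wb j) * a) • (D.zb j * Rr D (D.f1 i)) := by
  conv_lhs => rw [← D.hdualA2 a ha1]
  refine Finset.sum_congr rfl fun j _ => ?_
  have hwbM1 : D.wb j ∈ D.M1 := (D.hwb j).1
  have huM : D.EM (D.wb j * a) ∈ D.M := D.hEM_mem _ (D.M1.mul_mem hwbM1 ha1)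
  have huN : ∀ n ∈ D.N, D.EM (D.wb j * a) * n = n * D.EM (D.wb j * a) := by
    intro n hn
    have hnM : n ∈ D.M := D.hNM hn
    rw [← D.hEM_right n hnM _ (D.M1.mul_mem hwbM1 ha1),
      ← D.hEM_left n hnM _ (D.M1.mul_mem hwbM1 ha1)]
    congr 1
    rw [mul_assoc, ha2 n hn, ← mul_assoc, (D.hwb j).2 n hn, mul_assoc]
  have hcoeff : ∀ i : Fin D.nV, D.T ((Ll D (D.w * D.f2 i) * D.wb j) * a)
      = D.T (Ll D (D.w * D.f2 i) * D.EM (D.wb j * a)) := by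
    intro i
    have hLM : Ll D (D.w * D.f2 i) ∈ D.M :=
      Ll_mem D _ (D.M1.mul_mem D.hw_mem.1 (D.hf2 i).1)
    rw [mul_assoc, ← D.hEM_left _ hLM _ (D.M1.mul_mem hwbM1 ha1),
      D.hTEM _ (D.M1.mul_mem (D.hMM1 hLM) (D.M1.mul_mem hwbM1 ha1))]
  calc D.zb j * D.EM (D.wb j * a)
      = D.zb j * ∑ i, D.T (Ll D (D.w * D.f2 i) * D.EM (D.wb j * a)) • Rr D (D.f1 i) := by
        rw [Ustar D _ huM huN]
    _ = ∑ i, D.T ((Ll D (D.w * D.f2 i) * D.wb j) * a) • (D.zb j * Rr D (D.f1 i)) := by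
        rw [Finset.mul_sum]
        exact Finset.sum_congr rfl fun i _ => by rw [mul_smul_comm, hcoeff i]

end Aux3
section Aux4

variable {k : Type*} [Field k] {R : Type*} [Ring R] [Algebra k R] (D : D2H k R)

/-- commutes with `N` -/
def CN (x : R) : Prop := ∀ n ∈ D.N, x * n = n * x

lemma CN_mul {x y : R} (hx : CN D x) (hy : CN D y) : CN D (x * y) := by
  intro n hn
  rw [mul_assoc, hy n hn, ← mul_assoc, hx n hn, mul_assoc]

lemma CM_CN {x : R} (hx : CM D x) : CN D x := fun n hn => hx n (D.hNM hn)

lemma CN_e1 : CN D D.e1 := fun n hn => D.he1_N n hn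

lemma CN_EM1 {x : R} (hx : CN D x) : CN D (D.EM1 x) := by
  intro n hn
  have hnM1 : n ∈ D.M1 := D.hMM1 (D.hNM hn)
  rw [← D.hEM1_right n hnM1 x, hx n hn, D.hEM1_left n hnM1 x]

lemma rt_CN (b : R) (hb : CM D b) : CN D (D.EM1 (D.e2 * D.e1 * D.w * b)) := by
  refine CN_EM1 D ?_
  have h1 : CN D (D.e2 * D.e1 * D.w * b) := by
    exact CN_mul D (CN_mul D (CN_mul D (CM_CN D (CM_e2 D)) (CN_e1 D))
      (CM_CN D (CM_w D))) (CM_CN D hb)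
  exact h1

lemma PRf (a : R) (ha : a ∈ D.M1) (b : R) :
    D.T (a * D.e2 * D.e1 * D.w * b) = D.T (D.EM1 (D.e2 * D.e1 * D.w * b) * a) := by
  set rt := D.EM1 (D.e2 * D.e1 * D.w * b) with hrt
  have hrtM1 : rt ∈ D.M1 := D.hEM1_mem _
  have h1 : D.T (a * D.e2 * D.e1 * D.w * b) = D.T (D.e2 * (D.e1 * D.w * b * a)) := by
    rw [show a * D.e2 * D.e1 * D.w * b = a * (D.e2 * (D.e1 * D.w * b)) by
      simp only [mul_assoc], tr]
    congr 1
    simp only [mul_assoc]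
  rw [h1, D.hPP2' (D.e1 * D.w * b * a), Tsmul,
    show D.e2 * (D.e1 * D.w * b * a) = (D.e2 * D.e1 * D.w * b) * a by simp only [mul_assoc],
    D.hEM1_right a ha, ← hrt]
  have h2 : D.T (D.e2 * (rt * a)) = D.lam * D.T (rt * a) := by
    rw [tr, ← mul_one (rt * a * D.e2), Te2xy D _ (D.M1.mul_mem hrtM1 ha) 1 D.M1.one_mem,
      mul_one]
  rw [h2, ← mul_assoc, inv_mul_cancel₀ D.lam_ne, one_mul]

lemma e1wb (b : R) (_hb : CM D b) :
    D.e1 * (D.w * b) = D.lam⁻¹ ^ 2 • (D.e1 * (D.e2 * D.EM1 (D.e2 * D.e1 * D.w * b))) := by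
  set rt := D.EM1 (D.e2 * D.e1 * D.w * b) with hrt
  have harg : D.EM1 (D.e2 * (D.e1 * (D.w * b))) = rt := by
    rw [show D.e2 * (D.e1 * (D.w * b)) = D.e2 * D.e1 * D.w * b by simp only [mul_assoc], hrt]
  have h1 : D.e2 * (D.e1 * (D.w * b)) = D.lam⁻¹ • (D.e2 * rt) := by
    rw [D.hPP2' (D.e1 * (D.w * b)), harg]
  have h2 : D.e1 * (D.e2 * (D.e1 * (D.w * b))) = D.lam⁻¹ • (D.e1 * (D.e2 * rt)) := by
    rw [h1, mul_smul_comm]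
  have h3 : D.e1 * (D.e2 * (D.e1 * (D.w * b))) = D.lam • (D.e1 * (D.w * b)) := by
    rw [show D.e1 * (D.e2 * (D.e1 * (D.w * b))) = (D.e1 * D.e2 * D.e1) * (D.w * b) by
      simp only [mul_assoc], D.hbraid1, smul_mul_assoc]
  have h4 : D.lam • (D.e1 * (D.w * b)) = D.lam⁻¹ • (D.e1 * (D.e2 * rt)) := by
    rw [← h3, h2]
  calc D.e1 * (D.w * b) = D.lam⁻¹ • (D.lam • (D.e1 * (D.w * b))) := by
        rw [smul_smul, inv_mul_cancel₀ D.lam_ne, one_smul]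
    _ = D.lam⁻¹ ^ 2 • (D.e1 * (D.e2 * rt)) := by rw [h4, smul_smul, ← pow_two]

lemma BRecon (b : R) (hb : CM D b) :
    b = D.lam⁻¹ ^ 2 • ∑ i, D.winv *
      (D.xb i * (D.e1 * (D.e2 * (D.EM1 (D.e2 * D.e1 * D.w * b) * D.yb i)))) := by
  set rt := D.EM1 (D.e2 * D.e1 * D.w * b) with hrt
  have hwb : CM D (D.w * b) := CM_mul D (CM_w D) hb
  have h1 : D.w * b = D.lam⁻¹ ^ 2 • ∑ i, D.xb i * (D.e1 * (D.e2 * (rt * D.yb i))) := by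
    calc D.w * b = 1 * (D.w * b) := (one_mul _).symm
      _ = (∑ i, D.xb i * D.e1 * D.yb i) * (D.w * b) := by rw [L1]
      _ = ∑ i, D.xb i * ((D.e1 * (D.w * b)) * D.yb i) := by
          rw [Finset.sum_mul]
          refine Finset.sum_congr rfl fun i _ => ?_
          rw [show D.xb i * D.e1 * D.yb i * (D.w * b)
              = D.xb i * (D.e1 * (D.yb i * (D.w * b))) by simp only [mul_assoc],
            ← hwb _ (D.hyb i)]
          simp only [mul_assoc]
      _ = D.lam⁻¹ ^ 2 • ∑ i, D.xb i * (D.e1 * (D.e2 * (rt * D.yb i))) := by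
          rw [Finset.smul_sum]
          refine Finset.sum_congr rfl fun i _ => ?_
          rw [e1wb D b hb, ← hrt, smul_mul_assoc, mul_smul_comm]
          congr 1
          simp only [mul_assoc]
  calc b = D.winv * (D.w * b) := by rw [← mul_assoc, D.hw_inv.2, one_mul]
    _ = D.lam⁻¹ ^ 2 • ∑ i, D.winv *
        (D.xb i * (D.e1 * (D.e2 * (rt * D.yb i)))) := by
        rw [h1, mul_smul_comm, Finset.mul_sum]

/-- the `A`-side dual basis for the pairing -/
noncomputable def aaf (i' : Fin D.nV) (j : Fin D.nA) : R :=
  Ll D (D.w * D.f2 i') * D.wb j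

/-- the `B`-side dual basis for the pairing -/
noncomputable def bbf (i' : Fin D.nV) (j : Fin D.nA) (i : Fin D.nE) : R :=
  D.winv * (D.xb i * (D.e1 * (D.e2 * ((D.zb j * Rr D (D.f1 i')) * D.yb i))))

lemma aaf_M1 (i' : Fin D.nV) (j : Fin D.nA) : aaf D i' j ∈ D.M1 :=
  D.M1.mul_mem (D.hMM1 (Ll_mem D _ (D.M1.mul_mem D.hw_mem.1 (D.hf2 i').1))) (D.hwb j).1

lemma aaf_CN (i' : Fin D.nV) (j : Fin D.nA) : CN D (aaf D i' j) := by
  refine CN_mul D ?_ (D.hwb j).2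
  exact Ll_commN D _ (D.M1.mul_mem D.hw_mem.1 (D.hf2 i').1)
    (CM_mul D (CM_w D) (CM_f2 D i'))

/-- Reconstruction of elements of `B` from the pairing with `A`. -/
lemma RECONn (b : R) (hb : CM D b) :
    ∑ i, ∑ j, ∑ i', D.pr (aaf D i' j) b • bbf D i' j i = b := by
  set rt := D.EM1 (D.e2 * D.e1 * D.w * b) with hrt
  have hrtM1 : rt ∈ D.M1 := D.hEM1_mem _
  have hco : ∀ (i' : Fin D.nV) (j : Fin D.nA),
      D.T ((Ll D (D.w * D.f2 i') * D.wb j) * rt)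
        = D.T (Ll D (D.w * D.f2 i') * D.wb j * D.e2 * D.e1 * D.w * b) := by
    intro i' j
    rw [tr, hrt]
    exact (PRf D _ (aaf_M1 D i' j) b).symm
  have hAr2 : rt = ∑ j, ∑ i', (D.T (Ll D (D.w * D.f2 i') * D.wb j * D.e2 * D.e1 * D.w * b))
      • (D.zb j * Rr D (D.f1 i')) := by
    conv_lhs => rw [ARecon D rt hrtM1 (rt_CN D b hb)]
    exact Finset.sum_congr rfl fun j _ => Finset.sum_congr rfl fun i' _ => by rw [hco i' j]
  calc ∑ i, ∑ j, ∑ i', D.pr (aaf D i' j) b • bbf D i' j i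
      = D.lam⁻¹ ^ 2 • ∑ i, D.winv * (D.xb i * (D.e1 * (D.e2 * (rt * D.yb i)))) := by
        rw [Finset.smul_sum]
        refine Finset.sum_congr rfl fun i _ => ?_
        conv_rhs => rw [hAr2]
        rw [Finset.sum_mul, Finset.mul_sum, Finset.mul_sum, Finset.mul_sum, Finset.mul_sum,
          Finset.smul_sum]
        refine Finset.sum_congr rfl fun j _ => ?_
        rw [Finset.sum_mul, Finset.mul_sum, Finset.mul_sum, Finset.mul_sum, Finset.mul_sum,
          Finset.smul_sum]
        refine Finset.sum_congr rfl fun i' _ => ?_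
        simp only [D2H.pr, aaf, bbf, smul_mul_assoc, mul_smul_comm, smul_smul]
    _ = b := (BRecon D b hb).symm

end Aux4
section Aux5

variable {k : Type*} [Field k] {R : Type*} [Ring R] [Algebra k R] (D : D2H k R)

lemma dagger (g : Fin D.nV → R) (hg : ∀ i, CM D (g i)) (hSg : ∀ i, D.S (g i) = D.f1 i)
    (a1 a2 : R) (ha1M : a1 ∈ D.M1) (ha1N : CN D a1) (ha2M : a2 ∈ D.M1) (ha2N : CN D a2) :
    ∑ i, D.pr a1 (g i) * D.pr a2 (D.f2 i) = D.pr (a1 * a2) 1 := by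
  set u2 : R := Rr D a2 with hu2def
  have hu2M : u2 ∈ D.M := Rr_mem D a2 ha2M
  have hu2N : ∀ n ∈ D.N, u2 * n = n * u2 := Rr_commN D a2 ha2M ha2N
  have hwf2M1 : ∀ i : Fin D.nV, D.w * D.f2 i ∈ D.M1 :=
    fun i => D.M1.mul_mem D.hw_mem.1 (D.hf2 i).1
  have hf1e1 : ∀ i : Fin D.nV, D.f1 i * D.e1 ∈ D.M1 :=
    fun i => D.M1.mul_mem (D.hf1 i).1 D.he1_mem
  -- abbreviations for the three trace quantities
  set T1 : Fin D.nV → k := fun i => D.T ((D.f1 i * D.e1) * (D.w * a1)) with hT1def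
  set T2 : Fin D.nV → k := fun i => D.T (a2 * (D.e1 * (D.w * D.f2 i))) with hT2def
  set T0 : k := D.T ((a1 * a2) * (D.e1 * D.w)) with hT0def
  -- Step A
  have hA : ∀ i, D.pr a1 (g i) = D.lam⁻¹ * T1 i := by
    intro i
    calc D.pr a1 (g i) = D.lam⁻¹ ^ 2 * D.T (D.S (g i) * D.e1 * D.e2 * D.w * a1) :=
          D.hS_def a1 ha1M ha1N (g i) (hg i)
      _ = D.lam⁻¹ ^ 2 * D.T ((D.f1 i * D.e1) * D.e2 * (D.w * a1)) := by
          rw [hSg i, show D.f1 i * D.e1 * D.e2 * D.w * a1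
            = (D.f1 i * D.e1) * D.e2 * (D.w * a1) from by simp only [mul_assoc]]
      _ = D.lam⁻¹ ^ 2 * (D.lam * T1 i) := by
          rw [Te2xy D _ (hf1e1 i) _ (D.M1.mul_mem D.hw_mem.1 ha1M)]
      _ = D.lam⁻¹ * T1 i := by
          rw [pow_two, mul_assoc, ← mul_assoc D.lam⁻¹ D.lam,
            inv_mul_cancel₀ D.lam_ne, one_mul]
  -- Step B
  have hB : ∀ i, D.pr a2 (D.f2 i) = D.lam⁻¹ * T2 i := by
    intro i
    calc D.pr a2 (D.f2 i) = D.lam⁻¹ ^ 2 * D.T (a2 * D.e2 * D.e1 * D.w * D.f2 i) := rfl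
      _ = D.lam⁻¹ ^ 2 * D.T (a2 * D.e2 * (D.e1 * (D.w * D.f2 i))) := by
          rw [show a2 * D.e2 * D.e1 * D.w * D.f2 i
            = a2 * D.e2 * (D.e1 * (D.w * D.f2 i)) from by simp only [mul_assoc]]
      _ = D.lam⁻¹ ^ 2 * (D.lam * T2 i) := by
          rw [Te2xy D _ ha2M _ (D.M1.mul_mem D.he1_mem (hwf2M1 i))]
      _ = D.lam⁻¹ * T2 i := by
          rw [pow_two, mul_assoc, ← mul_assoc D.lam⁻¹ D.lam,
            inv_mul_cancel₀ D.lam_ne, one_mul]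
  -- Step C
  have hC : D.pr (a1 * a2) 1 = D.lam⁻¹ * T0 := by
    calc D.pr (a1 * a2) 1 = D.lam⁻¹ ^ 2 * D.T (a1 * a2 * D.e2 * D.e1 * D.w * 1) := rfl
      _ = D.lam⁻¹ ^ 2 * D.T ((a1 * a2) * D.e2 * (D.e1 * D.w)) := by
          rw [mul_one, show a1 * a2 * D.e2 * D.e1 * D.w
            = (a1 * a2) * D.e2 * (D.e1 * D.w) from by simp only [mul_assoc]]
      _ = D.lam⁻¹ ^ 2 * (D.lam * T0) := by
          rw [Te2xy D _ (D.M1.mul_mem ha1M ha2M) _ (D.M1.mul_mem D.he1_mem D.hw_mem.1)]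
      _ = D.lam⁻¹ * T0 := by
          rw [pow_two, mul_assoc, ← mul_assoc D.lam⁻¹ D.lam,
            inv_mul_cancel₀ D.lam_ne, one_mul]
  -- the second factor in terms of `u2`
  have hC1 : ∀ i, T2 i = D.lam * D.T (Ll D (D.w * D.f2 i) * u2) := by
    intro i
    calc T2 i = D.T (D.f2 i * (a2 * D.e1 * D.w)) := by
          show D.T (a2 * (D.e1 * (D.w * D.f2 i))) = _
          rw [show a2 * (D.e1 * (D.w * D.f2 i))
            = (a2 * D.e1 * D.w) * D.f2 i from by simp only [mul_assoc], tr]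
      _ = D.T (D.f2 i * (u2 * D.e1 * D.w)) := by rw [mul_e1 D a2 ha2M]
      _ = D.T ((u2 * D.e1) * (D.w * D.f2 i)) := by
          rw [show D.f2 i * (u2 * D.e1 * D.w) = (D.f2 i * (u2 * D.e1)) * D.w from by
            simp only [mul_assoc], tr,
            show D.w * (D.f2 i * (u2 * D.e1)) = (D.w * D.f2 i) * (u2 * D.e1) from by
            simp only [mul_assoc], tr]
      _ = D.T (u2 * D.e1 * Ll D (D.w * D.f2 i)) := by
          rw [mul_assoc, e1_mul D _ (hwf2M1 i), ← mul_assoc]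
      _ = D.lam * D.T (u2 * Ll D (D.w * D.f2 i)) :=
          Tme1m D _ hu2M _ (Ll_mem D _ (hwf2M1 i))
      _ = D.lam * D.T (Ll D (D.w * D.f2 i) * u2) := by rw [tr]
  -- expansion of `u2` by the transported dual bases
  have hu2 := Ustar D u2 hu2M hu2N
  have hexp : a1 * ((u2 * D.e1) * D.w)
      = ∑ i, D.T (Ll D (D.w * D.f2 i) * u2) • (a1 * ((Rr D (D.f1 i) * D.e1) * D.w)) := by
    conv_lhs => rw [← hu2]
    rw [Finset.sum_mul, Finset.sum_mul, Finset.mul_sum]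
    exact Finset.sum_congr rfl fun i _ => by
      rw [smul_mul_assoc, smul_mul_assoc, mul_smul_comm]
  have hT1' : ∀ i, D.T (a1 * ((Rr D (D.f1 i) * D.e1) * D.w)) = T1 i := by
    intro i
    rw [← mul_e1 D (D.f1 i) (D.hf1 i).1, tr, mul_assoc]
  -- CORE identity
  have hCORE : ∑ i, T1 i * T2 i = D.lam * T0 := by
    have h0 : T0 = D.T (a1 * ((u2 * D.e1) * D.w)) := by
      rw [hT0def, show (a1 * a2) * (D.e1 * D.w) = a1 * ((a2 * D.e1) * D.w) from by
        simp only [mul_assoc], mul_e1 D a2 ha2M]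
    have h1 : T0 = ∑ i, D.T (Ll D (D.w * D.f2 i) * u2) * T1 i := by
      rw [h0, hexp, map_sum]
      exact Finset.sum_congr rfl fun i _ => by rw [Tsmul, hT1' i]
    calc ∑ i, T1 i * T2 i
        = ∑ i, D.lam * (D.T (Ll D (D.w * D.f2 i) * u2) * T1 i) := by
          refine Finset.sum_congr rfl fun i _ => ?_
          rw [hC1 i]; ring
      _ = D.lam * ∑ i, D.T (Ll D (D.w * D.f2 i) * u2) * T1 i := by
          rw [Finset.mul_sum]
      _ = D.lam * T0 := by rw [← h1]
  -- final assembly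
  calc ∑ i, D.pr a1 (g i) * D.pr a2 (D.f2 i)
      = ∑ i, D.lam⁻¹ * D.lam⁻¹ * (T1 i * T2 i) := by
        refine Finset.sum_congr rfl fun i _ => ?_
        rw [hA i, hB i]; ring
    _ = D.lam⁻¹ * D.lam⁻¹ * (D.lam * T0) := by rw [← Finset.mul_sum, hCORE]
    _ = D.lam⁻¹ * T0 := by
        rw [mul_assoc, ← mul_assoc D.lam⁻¹ D.lam, inv_mul_cancel₀ D.lam_ne, one_mul]
    _ = D.pr (a1 * a2) 1 := (hC).symm

end Aux5
section Aux6

variable {k : Type*} [Field k] {R : Type*} [Ring R] [Algebra k R] (D : D2H k R)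

lemma pr_addR (a x y : R) : D.pr a (x + y) = D.pr a x + D.pr a y := by
  simp only [D2H.pr, mul_add, map_add]

lemma pr_smulR (a : R) (c : k) (x : R) : D.pr a (c • x) = c * D.pr a x := by
  simp only [D2H.pr, mul_smul_comm, map_smul, smul_eq_mul]; ring

/-- the reconstruction operator on `B` -/
noncomputable def theta : R →ₗ[k] R where
  toFun := fun b => ∑ i, ∑ j, ∑ i', D.pr (aaf D i' j) b • bbf D i' j i
  map_add' := fun x y => by
    simp only [pr_addR, add_smul, Finset.sum_add_distrib]
  map_smul' := fun c x => by
    simp only [pr_smulR, RingHom.id_apply, Finset.smul_sum, smul_smul]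

lemma theta_fix (b : R) (hb : CM D b) : theta D b = b := RECONn D b hb

/-- flattened index -/
abbrev Idx := Fin D.nE × Fin D.nA × Fin D.nV

noncomputable def aas (σ : Idx D) : R := aaf D σ.2.2 σ.2.1

noncomputable def bbs (σ : Idx D) : R := bbf D σ.2.2 σ.2.1 σ.1

lemma aas_M1 (σ : Idx D) : aas D σ ∈ D.M1 := aaf_M1 D _ _

lemma aas_CN (σ : Idx D) : CN D (aas D σ) := aaf_CN D _ _

lemma theta_apply' (b : R) : theta D b = ∑ σ : Idx D, D.pr (aas D σ) b • bbs D σ := by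
  show ∑ i, ∑ j, ∑ i', D.pr (aaf D i' j) b • bbf D i' j i = _
  simp only [aas, bbs, Fintype.sum_prod_type]

lemma exists_rep (t : R ⊗[k] R) : ∃ (n : ℕ) (f g : Fin n → R), t = ∑ i, f i ⊗ₜ[k] g i := by
  induction t using TensorProduct.induction_on with
  | zero => exact ⟨0, Fin.elim0, Fin.elim0, by simp⟩
  | tmul x y =>
      exact ⟨1, fun _ => x, fun _ => y, by rw [Fin.sum_univ_one]⟩
  | add x y hx hy =>
      obtain ⟨n, f, g, rfl⟩ := hx
      obtain ⟨m, f', g', rfl⟩ := hy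
      refine ⟨n + m, Fin.append f f', Fin.append g g', ?_⟩
      rw [Fin.sum_univ_add]
      simp only [Fin.append_left, Fin.append_right]

lemma theta_pair_sum (n : ℕ) (ff gg : Fin n → R) :
    TensorProduct.map (theta D) (theta D) (∑ t, ff t ⊗ₜ[k] gg t)
      = ∑ α : Idx D, ∑ β : Idx D,
        (∑ t, D.pr (aas D α) (ff t) * D.pr (aas D β) (gg t)) • (bbs D α ⊗ₜ[k] bbs D β) := by
  rw [map_sum]
  have h1 : ∀ t, TensorProduct.map (theta D) (theta D) (ff t ⊗ₜ[k] gg t)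
      = ∑ α : Idx D, ∑ β : Idx D,
        (D.pr (aas D α) (ff t) * D.pr (aas D β) (gg t)) • (bbs D α ⊗ₜ[k] bbs D β) := by
    intro t
    rw [TensorProduct.map_tmul, theta_apply', theta_apply', TensorProduct.sum_tmul]
    refine Finset.sum_congr rfl fun α _ => ?_
    rw [← TensorProduct.smul_tmul', TensorProduct.tmul_sum, Finset.smul_sum]
    refine Finset.sum_congr rfl fun β _ => ?_
    rw [TensorProduct.tmul_smul, smul_smul]
  rw [Finset.sum_congr rfl fun t _ => h1 t, Finset.sum_comm]
  refine Finset.sum_congr rfl fun α _ => ?_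
  rw [Finset.sum_comm]
  refine Finset.sum_congr rfl fun β _ => ?_
  rw [Finset.sum_smul]

lemma theta_fix_span (z : R ⊗[k] R)
    (hz : z ∈ Submodule.span k {z : R ⊗[k] R |
      ∃ b1, (∀ y ∈ D.M, b1 * y = y * b1) ∧ ∃ b2, (∀ y ∈ D.M, b2 * y = y * b2) ∧
        z = b1 ⊗ₜ[k] b2}) :
    TensorProduct.map (theta D) (theta D) z = z := by
  induction hz using Submodule.span_induction with
  | mem z hzs =>
      obtain ⟨b1, hb1, b2, hb2, rfl⟩ := hzs
      rw [TensorProduct.map_tmul, theta_fix D b1 hb1, theta_fix D b2 hb2]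
  | zero => simp
  | add x y _ _ hx hy => rw [map_add, hx, hy]
  | smul c x _ hx => rw [map_smul, hx]

lemma memB_iff (b : R) : b ∈ D2.B D.toD2S.toD2 ↔ CM D b := by
  rw [D2.B, Subalgebra.mem_centralizer_iff]
  constructor
  · intro h m hm; exact (h m hm).symm
  · intro h m hm; exact (h m hm).symm

end Aux6
/-- for all `b ∈ B`: `ε(b) = λ⁻¹ T(e₂ w b)`; `ε(S(b)) = ε(b)`; and
`Δ(1) = S⁻¹(f⁽¹⁾) ⊗ f⁽²⁾`. -/
theorem stmt9 {k : Type*} [Field k] {R : Type*} [Ring R] [Algebra k R] (D : D2H k R) :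
    (∀ b ∈ D2.B D.toD2S.toD2, D.eps b = D.lam⁻¹ * D.T (D.e2 * D.w * b)) ∧
    (∀ b ∈ D2.B D.toD2S.toD2, D.eps (D.S b) = D.eps b) ∧
    (∃ g : Fin D.nV → R, (∀ i, g i ∈ D2.B D.toD2S.toD2) ∧
      (∀ i, D.S (g i) = D.f1 i) ∧
      D.Δ 1 = ∑ i, g i ⊗ₜ[k] D.f2 i) := by
  refine ⟨fun b hb => part1 D b ((memB_iff D b).1 hb),
    fun b hb => part2 D b ((memB_iff D b).1 hb), ?_⟩
  have hsur : Set.SurjOn D.S {b : R | ∀ y ∈ D.M, b * y = y * b}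
      {b : R | ∀ y ∈ D.M, b * y = y * b} := D.hS_bijOn.2.2
  have hex : ∀ i : Fin D.nV, ∃ x, (∀ y ∈ D.M, x * y = y * x) ∧ D.S x = D.f1 i := by
    intro i
    obtain ⟨x, hx1, hx2⟩ := hsur (show D.f1 i ∈ {b : R | ∀ y ∈ D.M, b * y = y * b}
      from (D.hf1 i).2)
    exact ⟨x, hx1, hx2⟩
  choose g hgCM hgS using hex
  refine ⟨g, fun i => (memB_iff D _).2 (hgCM i), hgS, ?_⟩
  have h1CM : ∀ y ∈ D.M, (1 : R) * y = y * 1 := fun y _ => by rw [one_mul, mul_one]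
  obtain ⟨n, ff, gg, hrep⟩ := exists_rep (D.Δ 1)
  have hΔfix : TensorProduct.map (theta D) (theta D) (D.Δ 1) = D.Δ 1 :=
    theta_fix_span D _ (D.hΔ_mem 1 h1CM)
  have hgfix : TensorProduct.map (theta D) (theta D) (∑ i, g i ⊗ₜ[k] D.f2 i)
      = ∑ i, g i ⊗ₜ[k] D.f2 i := by
    rw [map_sum]
    exact Finset.sum_congr rfl fun i _ => by
      rw [TensorProduct.map_tmul, theta_fix D _ (hgCM i), theta_fix D _ (CM_f2 D i)]
  have hdelta : ∀ α β : Idx D, ∑ t, D.pr (aas D α) (ff t) * D.pr (aas D β) (gg t)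
      = D.pr (aas D α * aas D β) 1 := by
    intro α β
    exact D.hΔ_def (aas D α) (aas_M1 D α) (aas_CN D α) (aas D β) (aas_M1 D β) (aas_CN D β)
      1 h1CM n ff gg hrep
  have hdag : ∀ α β : Idx D, ∑ i, D.pr (aas D α) (g i) * D.pr (aas D β) (D.f2 i)
      = D.pr (aas D α * aas D β) 1 :=
    fun α β => dagger D g hgCM hgS (aas D α) (aas D β) (aas_M1 D α) (aas_CN D α)
      (aas_M1 D β) (aas_CN D β)
  calc D.Δ 1 = TensorProduct.map (theta D) (theta D) (D.Δ 1) := hΔfix.symm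
    _ = TensorProduct.map (theta D) (theta D) (∑ t, ff t ⊗ₜ[k] gg t) := by rw [← hrep]
    _ = ∑ α : Idx D, ∑ β : Idx D, (D.pr (aas D α * aas D β) 1) • (bbs D α ⊗ₜ[k] bbs D β) := by
        rw [theta_pair_sum]
        exact Finset.sum_congr rfl fun α _ => Finset.sum_congr rfl fun β _ => by
          rw [hdelta α β]
    _ = TensorProduct.map (theta D) (theta D) (∑ i, g i ⊗ₜ[k] D.f2 i) := by
        rw [theta_pair_sum]
        exact (Finset.sum_congr rfl fun α _ => Finset.sum_congr rfl fun β _ => by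
          rw [hdag α β]).symm
    _ = ∑ i, g i ⊗ₜ[k] D.f2 i := hgfix
end

section
/- The antipode S is an algebra anti-homomorphism: S(b b') = S(b') S(b) for all b, b' ∈ B. -/
open scoped TensorProduct
open TensorProduct

open D2 D2H

namespace StmtTenAux

variable {k : Type*} [Field k] {R : Type*} [Ring R] [Algebra k R]

/-- Elements of `N` are in `M1`. -/
lemma memNM1 (D : D2H k R) {n : R} (hn : n ∈ D.N) : n ∈ D.M1 := D.hMM1 (D.hNM hn)

/-- Expansion of any element of `M₂ = R` along `M₁ e₂ M₁` using the
depth-two dual bases for `E_M`. -/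
lemma expand (D : D2H k R) (x : R) :
    x = D.lam⁻¹ • ∑ j, D.zb j * (D.e2 * D.EM1 (D.e2 * (D.wb j * x))) := by
  have hx : x ∈ Submodule.span k {z : R | ∃ p ∈ D.M1, ∃ q ∈ D.M1, z = p * D.e2 * q} := by
    rw [← D.hM2_gen]; exact Submodule.mem_top
  induction hx using Submodule.span_induction with
  | mem z hz =>
    obtain ⟨p, hp, q, hq, rfl⟩ := hz
    have step : ∀ j : Fin D.nA, D.EM1 (D.e2 * (D.wb j * (p * D.e2 * q)))
        = D.lam • (D.EM (D.wb j * p) * q) := by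
      intro j
      have hwp : D.wb j * p ∈ D.M1 := mul_mem (D.hwb j).1 hp
      have h1 : D.e2 * (D.wb j * (p * D.e2 * q))
          = (D.e2 * (D.wb j * p) * D.e2) * q := by simp only [mul_assoc]
      rw [h1, D.he2_jones _ hwp]
      have h2 : D.e2 * D.EM (D.wb j * p) * q
          = (1 : R) * D.e2 * (D.EM (D.wb j * p) * q) := by
        simp only [one_mul, mul_assoc]
      rw [h2, D.hEM1_e2 1 (one_mem _) _
        (mul_mem (D.hMM1 (D.hEM_mem _ hwp)) hq), one_mul]
    calc p * D.e2 * q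
        = (∑ j, D.zb j * D.EM (D.wb j * p)) * (D.e2 * q) := by
          rw [D.hdualA2 p hp, ← mul_assoc]
      _ = ∑ j, D.zb j * (D.e2 * (D.EM (D.wb j * p) * q)) := by
          rw [Finset.sum_mul]
          refine Finset.sum_congr rfl fun j _ => ?_
          rw [mul_assoc, ← mul_assoc (D.EM (D.wb j * p)) D.e2 q,
            ← D.he2_M _ (D.hEM_mem _ (mul_mem (D.hwb j).1 hp)), mul_assoc]
      _ = D.lam⁻¹ • ∑ j, D.zb j * (D.e2 * D.EM1 (D.e2 * (D.wb j * (p * D.e2 * q)))) := by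
          simp only [step, mul_smul_comm, ← Finset.smul_sum, smul_smul,
            inv_mul_cancel₀ D.lam_ne, one_smul]
  | zero => simp
  | add u v hu hv ihu ihv =>
      simp only [mul_add, map_add, Finset.sum_add_distrib, smul_add]
      rw [← ihu, ← ihv]
  | smul c u hu ihu =>
      calc c • u
          = c • (D.lam⁻¹ • ∑ j, D.zb j * (D.e2 * D.EM1 (D.e2 * (D.wb j * u)))) := by
            rw [← ihu]
        _ = D.lam⁻¹ • ∑ j, D.zb j * (D.e2 * D.EM1 (D.e2 * (D.wb j * (c • u)))) := by
            rw [smul_comm c D.lam⁻¹]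
            congr 1
            rw [Finset.smul_sum]
            refine Finset.sum_congr rfl fun j _ => ?_
            simp only [mul_smul_comm, map_smul]

/-- Non-degeneracy of the trace `T` on `A = C_{M₁}(N)`. -/
lemma nondegA (D : D2H k R) (d : R) (hd1 : d ∈ D.M1)
    (hd2 : ∀ n ∈ D.N, d * n = n * d)
    (h : ∀ a, a ∈ D.M1 → (∀ n ∈ D.N, a * n = n * a) → D.T (a * d) = 0) :
    d = 0 := by
  have key : ∀ j : Fin D.nA, D.EM (D.wb j * d) = 0 := by
    intro j
    have hwd : D.wb j * d ∈ D.M1 := mul_mem (D.hwb j).1 hd1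
    refine D.hU_nondeg _ (D.hEM_mem _ hwd) ?_ ?_
    · intro n hn
      have c1 : Commute n (D.wb j) := ((D.hwb j).2 n hn).symm
      have c2 : Commute n d := (hd2 n hn).symm
      have h1 : n * (D.wb j * d) = (D.wb j * d) * n := (c1.mul_right c2).eq
      rw [← D.hEM_right n (D.hNM hn) _ hwd, ← h1, D.hEM_left n (D.hNM hn) _ hwd]
    · intro u' hu' hu'N
      have hmem : u' * D.wb j ∈ D.M1 := mul_mem (D.hMM1 hu') (D.hwb j).1
      have hcomm : ∀ n ∈ D.N, (u' * D.wb j) * n = n * (u' * D.wb j) := by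
        intro n hn
        have c1 : Commute n u' := (hu'N n hn).symm
        have c2 : Commute n (D.wb j) := ((D.hwb j).2 n hn).symm
        exact (c1.mul_right c2).eq.symm
      have := h _ hmem hcomm
      rw [D.hT_tr, ← D.hEM_left u' hu' _ hwd,
        D.hTEM _ (mul_mem (D.hMM1 hu') hwd), ← mul_assoc]
      exact this
  have := D.hdualA2 d hd1
  rw [← this]
  simp only [key, mul_zero, Finset.sum_const_zero]

/-- `T(a e₂ e₁ w b) = T(a · EM1(e₂ e₁ w b))` for `a ∈ M₁`. -/
lemma pairT (D : D2H k R) (a : R) (ha : a ∈ D.M1) (b : R) :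
    D.T (a * D.e2 * D.e1 * D.w * b)
      = D.T (a * D.EM1 (D.e2 * (D.e1 * (D.w * b)))) := by
  set d := D.EM1 (D.e2 * (D.e1 * (D.w * b))) with hd
  have hdm : d ∈ D.M1 := D.hEM1_mem _
  have h1 : a * D.e2 * D.e1 * D.w * b = a * (D.e2 * (D.e1 * (D.w * b))) := by
    simp only [mul_assoc]
  have h3 : D.EM1 (a * D.e2 * d) = D.lam • (a * d) := D.hEM1_e2 a ha d hdm
  rw [h1, D.hPP2' (D.e1 * (D.w * b)), ← hd, mul_smul_comm, map_smul, smul_eq_mul,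
    ← D.hTEM1 (a * (D.e2 * d)), ← mul_assoc a D.e2 d, h3, map_smul, smul_eq_mul,
    ← mul_assoc, inv_mul_cancel₀ D.lam_ne, one_mul]

/-- `T(x e₁ e₂ w a) = T(EM1(x e₁ e₂) · (w a))` for `a ∈ M₁`. -/
lemma prT (D : D2H k R) (x a : R) (ha : a ∈ D.M1) :
    D.T (x * D.e1 * D.e2 * D.w * a)
      = D.T (D.EM1 (x * D.e1 * D.e2) * (D.w * a)) := by
  have h1 : x * D.e1 * D.e2 * D.w * a = (x * D.e1 * D.e2) * (D.w * a) := by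
    simp only [mul_assoc]
  rw [h1, ← D.hTEM1 ((x * D.e1 * D.e2) * (D.w * a)),
    D.hEM1_right (D.w * a) (mul_mem D.hw_mem.1 ha) _]

/-- `hS_def` with the scalar factor cancelled. -/
lemma hS_def' (D : D2H k R) (a : R) (ha : a ∈ D.M1)
    (haN : ∀ n ∈ D.N, a * n = n * a) (b : R) (hb : ∀ y ∈ D.M, b * y = y * b) :
    D.T (a * D.e2 * D.e1 * D.w * b) = D.T (D.S b * D.e1 * D.e2 * D.w * a) :=
  mul_left_cancel₀ (pow_ne_zero 2 (inv_ne_zero D.lam_ne)) (D.hS_def a ha haN b hb)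

/-- Commutation with `N` of `EM1(e₂ (e₁ (w b)))` for `b ∈ B`. -/
lemma db_commN (D : D2H k R) (b : R) (hb : ∀ y ∈ D.M, b * y = y * b) :
    ∀ n ∈ D.N, D.EM1 (D.e2 * (D.e1 * (D.w * b))) * n
      = n * D.EM1 (D.e2 * (D.e1 * (D.w * b))) := by
  intro n hn
  have hnM : n ∈ D.M := D.hNM hn
  have c1 : Commute n D.e2 := (D.he2_M n hnM).symm
  have c2 : Commute n D.e1 := (D.he1_N n hn).symm
  have c3 : Commute n D.w := (D.hw_mem.2 n hnM).symm
  have c4 : Commute n b := (hb n hnM).symm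
  have c : Commute n (D.e2 * (D.e1 * (D.w * b))) :=
    c1.mul_right (c2.mul_right (c3.mul_right c4))
  rw [← D.hEM1_left n (memNM1 D hn) _, c.eq, D.hEM1_right n (memNM1 D hn) _]

/-- Commutation with `N` of `EM1(s e₁ e₂)` for `s ∈ B`. -/
lemma qb_commN (D : D2H k R) (s : R) (hs : ∀ y ∈ D.M, s * y = y * s) :
    ∀ n ∈ D.N, D.EM1 (s * D.e1 * D.e2) * n = n * D.EM1 (s * D.e1 * D.e2) := by
  intro n hn
  have hnM : n ∈ D.M := D.hNM hn
  have c1 : Commute n s := (hs n hnM).symm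
  have c2 : Commute n D.e1 := (D.he1_N n hn).symm
  have c3 : Commute n D.e2 := (D.he2_M n hnM).symm
  have c : Commute n (s * D.e1 * D.e2) := (c1.mul_right c2).mul_right c3
  rw [← D.hEM1_left n (memNM1 D hn) _, c.eq, D.hEM1_right n (memNM1 D hn) _]

/-- The characterization of the antipode: `EM1(e₂ e₁ w b) = EM1(S(b) e₁ e₂) · w`. -/
lemma qchar (D : D2H k R) (b : R) (hb : ∀ y ∈ D.M, b * y = y * b) :
    D.EM1 (D.e2 * (D.e1 * (D.w * b))) = D.EM1 (D.S b * D.e1 * D.e2) * D.w := by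
  have hdm : D.EM1 (D.e2 * (D.e1 * (D.w * b))) ∈ D.M1 := D.hEM1_mem _
  have hqm : D.EM1 (D.S b * D.e1 * D.e2) ∈ D.M1 := D.hEM1_mem _
  have hSb := D.hS_mem b hb
  have hdN := db_commN D b hb
  have hqN := qb_commN D (D.S b) hSb
  have hwN : ∀ n ∈ D.N, D.w * n = n * D.w := fun n hn => D.hw_mem.2 n (D.hNM hn)
  have sub_mem :
      D.EM1 (D.e2 * (D.e1 * (D.w * b))) - D.EM1 (D.S b * D.e1 * D.e2) * D.w
        ∈ D.M1 := sub_mem hdm (mul_mem hqm D.hw_mem.1)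
  have sub_comm : ∀ n ∈ D.N,
      (D.EM1 (D.e2 * (D.e1 * (D.w * b))) - D.EM1 (D.S b * D.e1 * D.e2) * D.w) * n
        = n * (D.EM1 (D.e2 * (D.e1 * (D.w * b))) - D.EM1 (D.S b * D.e1 * D.e2) * D.w) := by
    intro n hn
    rw [sub_mul, mul_sub, hdN n hn,
      mul_assoc (D.EM1 (D.S b * D.e1 * D.e2)) D.w n, hwN n hn,
      ← mul_assoc (D.EM1 (D.S b * D.e1 * D.e2)) n D.w, hqN n hn,
      mul_assoc n (D.EM1 (D.S b * D.e1 * D.e2)) D.w]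
  have main : ∀ a, a ∈ D.M1 → (∀ n ∈ D.N, a * n = n * a) →
      D.T (a * (D.EM1 (D.e2 * (D.e1 * (D.w * b)))
        - D.EM1 (D.S b * D.e1 * D.e2) * D.w)) = 0 := by
    intro a ha haN
    have e1 : D.T (a * D.EM1 (D.e2 * (D.e1 * (D.w * b))))
        = D.T (a * D.e2 * D.e1 * D.w * b) := (pairT D a ha b).symm
    have e2 : D.T (D.S b * D.e1 * D.e2 * D.w * a)
        = D.T (a * (D.EM1 (D.S b * D.e1 * D.e2) * D.w)) := by
      rw [prT D (D.S b) a ha,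
        ← mul_assoc (D.EM1 (D.S b * D.e1 * D.e2)) D.w a, D.hT_tr]
    have e3 := hS_def' D a ha haN b hb
    rw [mul_sub, map_sub, e1, e3, e2, sub_self]
  exact sub_eq_zero.mp (nondegA D _ sub_mem sub_comm main)

/-- Ξ-identity: `m · EM1(s e₁ e₂) = ∑ⱼ zⱼ EM(EM1(e₂ wⱼ s) m e₁)` for `s ∈ B`, `m ∈ M`. -/
lemma lemL6 (D : D2H k R) (s : R) (hs : ∀ y ∈ D.M, s * y = y * s)
    (m : R) (hm : m ∈ D.M) :
    m * D.EM1 (s * D.e1 * D.e2)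
      = ∑ j, D.zb j * D.EM (D.EM1 (D.e2 * (D.wb j * s)) * m * D.e1) := by
  have h0 : m * D.EM1 (s * D.e1 * D.e2) = D.EM1 ((s * m) * (D.e1 * D.e2)) := by
    rw [← D.hEM1_left m (D.hMM1 hm) _]
    congr 1
    calc m * (s * D.e1 * D.e2) = (m * s) * (D.e1 * D.e2) := by simp only [mul_assoc]
      _ = (s * m) * (D.e1 * D.e2) := by rw [← hs m hm]
  have h1 : s * m
      = D.lam⁻¹ • ∑ j, D.zb j * (D.e2 * (D.EM1 (D.e2 * (D.wb j * s)) * m)) := by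
    conv_lhs => rw [expand D s]
    rw [smul_mul_assoc, Finset.sum_mul]
    congr 1
    exact Finset.sum_congr rfl fun j _ => by simp only [mul_assoc]
  have h2 : ∀ j : Fin D.nA,
      D.EM1 ((D.zb j * (D.e2 * (D.EM1 (D.e2 * (D.wb j * s)) * m))) * (D.e1 * D.e2))
        = D.lam • (D.zb j * D.EM (D.EM1 (D.e2 * (D.wb j * s)) * m * D.e1)) := by
    intro j
    set g := D.EM1 (D.e2 * (D.wb j * s)) with hg
    have hgme : g * m * D.e1 ∈ D.M1 :=
      mul_mem (mul_mem (D.hEM1_mem _) (D.hMM1 hm)) D.he1_mem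
    have c1 : (D.zb j * (D.e2 * (g * m))) * (D.e1 * D.e2)
        = D.zb j * (D.e2 * (g * m * D.e1) * D.e2) := by simp only [mul_assoc]
    rw [c1, D.he2_jones _ hgme, ← mul_assoc (D.zb j) D.e2 _,
      D.hEM1_e2 _ (D.hzb j).1 _ (D.hMM1 (D.hEM_mem _ hgme))]
  rw [h0, h1, smul_mul_assoc, Finset.sum_mul, map_smul, map_sum]
  simp only [h2]
  rw [← Finset.smul_sum, smul_smul, inv_mul_cancel₀ D.lam_ne, one_smul]

/-- Main structural identity:
`EM1(e₂ γ w b') = ∑ⱼ zⱼ (EM(EM1(e₂ wⱼ S(b')) γ) w)` for all `γ ∈ M₁`, `b' ∈ B`. -/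
lemma lemL7 (D : D2H k R) (b' : R) (hb' : ∀ y ∈ D.M, b' * y = y * b')
    (γ : R) (hγ : γ ∈ D.M1) :
    D.EM1 (D.e2 * (γ * (D.w * b')))
      = ∑ j, D.zb j * (D.EM (D.EM1 (D.e2 * (D.wb j * D.S b')) * γ) * D.w) := by
  have hSb' := D.hS_mem b' hb'
  have hγ' : γ ∈ Submodule.span k
      {z : R | ∃ m ∈ D.M, ∃ m' ∈ D.M, z = m * D.e1 * m'} := by
    rw [← D.hM1_gen]; exact hγ
  clear hγ
  induction hγ' using Submodule.span_induction with
  | mem z hz =>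
    obtain ⟨m, hm, m', hm', rfl⟩ := hz
    have c1 : m' * (D.w * b') = (D.w * b') * m' := by
      rw [← mul_assoc, ← D.hw_mem.2 m' hm', mul_assoc, ← hb' m' hm', ← mul_assoc]
    -- left hand side
    have c2 : (m * D.e1 * m') * (D.w * b') = m * ((D.e1 * (D.w * b')) * m') := by
      rw [mul_assoc m D.e1 m', mul_assoc m, mul_assoc D.e1 m', c1,
        ← mul_assoc D.e1]
    have c3 : D.e2 * (m * ((D.e1 * (D.w * b')) * m'))
        = m * ((D.e2 * (D.e1 * (D.w * b'))) * m') := by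
      rw [← mul_assoc, D.he2_M m hm, mul_assoc, ← mul_assoc D.e2]
    have lhs : D.EM1 (D.e2 * ((m * D.e1 * m') * (D.w * b')))
        = m * (D.EM1 (D.S b' * D.e1 * D.e2) * D.w * m') := by
      rw [c2, c3, D.hEM1_left m (D.hMM1 hm) _,
        D.hEM1_right m' (D.hMM1 hm') _, qchar D b' hb']
    rw [lhs]
    -- right hand side
    have rhs : ∀ j : Fin D.nA,
        D.zb j * (D.EM (D.EM1 (D.e2 * (D.wb j * D.S b')) * (m * D.e1 * m')) * D.w)
          = (D.zb j * D.EM (D.EM1 (D.e2 * (D.wb j * D.S b')) * m * D.e1))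
              * (m' * D.w) := by
      intro j
      set g := D.EM1 (D.e2 * (D.wb j * D.S b')) with hg
      have hgm : g * m * D.e1 ∈ D.M1 :=
        mul_mem (mul_mem (D.hEM1_mem _) (D.hMM1 hm)) D.he1_mem
      have c4 : g * (m * D.e1 * m') = (g * m * D.e1) * m' := by
        simp only [mul_assoc]
      rw [c4, D.hEM_right m' hm' _ hgm]
      simp only [mul_assoc]
    rw [Finset.sum_congr rfl fun j _ => rhs j, ← Finset.sum_mul,
      ← lemL6 D (D.S b') hSb' m hm,
      mul_assoc (D.EM1 (D.S b' * D.e1 * D.e2)) D.w m', D.hw_mem.2 m' hm']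
    simp only [mul_assoc]
  | zero => simp
  | add u v hu hv ihu ihv =>
      simp only [add_mul, mul_add, map_add, Finset.sum_add_distrib]
      rw [ihu, ihv]
  | smul c u hu ihu =>
      simp only [smul_mul_assoc, mul_smul_comm, map_smul, ← Finset.smul_sum]
      rw [ihu]

/-- The key computation, step C. -/
lemma stepC (D : D2H k R) (a : R) (ha : a ∈ D.M1)
    (haN : ∀ n ∈ D.N, a * n = n * a)
    (b : R) (hb : ∀ y ∈ D.M, b * y = y * b)
    (b' : R) (hb' : ∀ y ∈ D.M, b' * y = y * b') :
    D.T (a * D.e2 * D.e1 * D.w * (b * b'))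
      = D.T (D.S b' * D.S b * D.e1 * D.e2 * D.w * a) := by
  have hSb' := D.hS_mem b' hb'
  set q := D.EM1 (D.S b * D.e1 * D.e2) with hq
  have hqm : q ∈ D.M1 := D.hEM1_mem _
  set Y := ∑ j, D.zb j * (D.EM (D.EM1 (D.e2 * (D.wb j * D.S b')) * q) * D.w) with hY
  have hYm : Y ∈ D.M1 := by
    refine Subalgebra.sum_mem _ fun j _ => ?_
    exact mul_mem (D.hzb j).1
      (mul_mem (D.hMM1 (D.hEM_mem _ (mul_mem (D.hEM1_mem _) hqm))) D.hw_mem.1)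
  -- left hand side
  have L : D.T (a * D.e2 * D.e1 * D.w * (b * b')) = D.lam⁻¹ * D.T (a * Y) := by
    have h1 : a * D.e2 * D.e1 * D.w * (b * b')
        = a * (D.e2 * (D.e1 * ((D.w * b) * b'))) := by
      simp only [mul_assoc]
    rw [h1, ← mul_assoc D.e1 (D.w * b) b', ← mul_assoc D.e2 (D.e1 * (D.w * b)) b',
      D.hPP2' (D.e1 * (D.w * b)), qchar D b hb, ← hq, smul_mul_assoc,
      mul_smul_comm, map_smul, smul_eq_mul]
    have h2 : D.e2 * (q * D.w) * b' = D.e2 * (q * (D.w * b')) := by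
      simp only [mul_assoc]
    rw [h2, D.hPP2' (q * (D.w * b')), lemL7 D b' hb' q hqm, ← hY, mul_smul_comm,
      map_smul, smul_eq_mul, ← mul_assoc a D.e2 Y, ← D.hTEM1 (a * D.e2 * Y),
      D.hEM1_e2 a ha Y hYm, map_smul, smul_eq_mul, ← mul_assoc D.lam⁻¹ D.lam _,
      inv_mul_cancel₀ D.lam_ne, one_mul]
  -- right hand side
  have Rr : D.T (D.S b' * D.S b * D.e1 * D.e2 * D.w * a) = D.lam⁻¹ * D.T (Y * a) := by
    have h1 : D.S b' * D.S b * D.e1 * D.e2 * D.w * a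
        = D.S b' * ((D.S b * D.e1) * D.e2 * (D.w * a)) := by
      simp only [mul_assoc]
    rw [h1, D.hPP2 (D.S b * D.e1)]
    have h2 : D.EM1 (D.S b * D.e1 * D.e2) = q := hq.symm
    rw [h2, smul_mul_assoc, mul_smul_comm, map_smul, smul_eq_mul]
    conv_lhs => rw [expand D (D.S b')]
    rw [smul_mul_assoc, Finset.sum_mul, map_smul, map_sum, smul_eq_mul]
    have h3 : ∀ j : Fin D.nA,
        D.T ((D.zb j * (D.e2 * D.EM1 (D.e2 * (D.wb j * D.S b')))) * (q * D.e2 * (D.w * a)))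
          = D.lam * D.T (D.zb j * (D.EM (D.EM1 (D.e2 * (D.wb j * D.S b')) * q) * (D.w * a))) := by
      intro j
      set g := D.EM1 (D.e2 * (D.wb j * D.S b')) with hg
      have hgq : g * q ∈ D.M1 := mul_mem (D.hEM1_mem _) hqm
      have c1 : (D.zb j * (D.e2 * g)) * (q * D.e2 * (D.w * a))
          = D.zb j * (D.e2 * (g * q) * D.e2 * (D.w * a)) := by
        simp only [mul_assoc]
      rw [c1, D.he2_jones _ hgq]
      have c2 : D.zb j * (D.e2 * D.EM (g * q) * (D.w * a))
          = D.zb j * D.e2 * (D.EM (g * q) * (D.w * a)) := by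
        simp only [mul_assoc]
      rw [c2, ← D.hTEM1 (D.zb j * D.e2 * (D.EM (g * q) * (D.w * a))),
        D.hEM1_e2 _ (D.hzb j).1 _
          (mul_mem (D.hMM1 (D.hEM_mem _ hgq)) (mul_mem D.hw_mem.1 ha)),
        map_smul, smul_eq_mul]
    rw [Finset.sum_congr rfl fun j _ => h3 j, ← Finset.mul_sum]
    have hsum : D.T (Y * a)
        = ∑ j, D.T (D.zb j *
            (D.EM (D.EM1 (D.e2 * (D.wb j * D.S b')) * q) * (D.w * a))) := by
      rw [hY, Finset.sum_mul, map_sum]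
      refine Finset.sum_congr rfl fun j _ => ?_
      congr 1
      simp only [mul_assoc]
    rw [hsum, ← mul_assoc D.lam⁻¹ D.lam _, inv_mul_cancel₀ D.lam_ne, one_mul]
  rw [L, Rr, D.hT_tr a Y]

/-- Injectivity: if `b ∈ B` pairs to zero with all of `A` (in the `e₁ e₂` form),
then `b = 0`. -/
lemma injB (D : D2H k R) (x : R) (hx : ∀ y ∈ D.M, x * y = y * x)
    (h : ∀ a, a ∈ D.M1 → (∀ n ∈ D.N, a * n = n * a) →
      D.T (x * D.e1 * D.e2 * D.w * a) = 0) :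
    x = 0 := by
  set dx := D.EM1 (x * D.e1 * D.e2) with hdx
  have hdxm : dx ∈ D.M1 := D.hEM1_mem _
  have hdxN := qb_commN D x hx
  have hwN : ∀ n ∈ D.N, D.w * n = n * D.w := fun n hn => D.hw_mem.2 n (D.hNM hn)
  have hzero : dx * D.w = 0 := by
    refine nondegA D _ (mul_mem hdxm D.hw_mem.1) ?_ ?_
    · intro n hn
      rw [mul_assoc, hwN n hn, ← mul_assoc, hdxN n hn, mul_assoc]
    · intro a ha haN
      have h1 := h a ha haN
      rw [prT D x a ha, ← hdx, ← mul_assoc, D.hT_tr] at h1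
      exact h1
  have hdx0 : dx = 0 := by
    have h2 := congrArg (· * D.winv) hzero
    simpa [mul_assoc, D.hw_inv.1] using h2
  have hxe : x * D.e1 * D.e2 = 0 := by
    rw [D.hPP2 (x * D.e1), ← hdx, hdx0, zero_mul, smul_zero]
  have h1 : (1 : R) ∈ Submodule.span k
      {z : R | ∃ p ∈ D.M1, ∃ q ∈ D.M1, z = p * D.e2 * q} := by
    rw [← D.hM2_gen]; exact Submodule.mem_top
  have main : ∀ t ∈ Submodule.span k
      {z : R | ∃ p ∈ D.M1, ∃ q ∈ D.M1, z = p * D.e2 * q}, x * t = 0 := by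
    intro t ht
    induction ht using Submodule.span_induction with
    | mem z hz =>
      obtain ⟨p, hp, qq, hqq, rfl⟩ := hz
      have hp' : p ∈ Submodule.span k
          {z : R | ∃ m ∈ D.M, ∃ m' ∈ D.M, z = m * D.e1 * m'} := by
        rw [← D.hM1_gen]; exact hp
      clear hp
      induction hp' using Submodule.span_induction with
      | mem zz hzz =>
        obtain ⟨m, hm, m', hm', rfl⟩ := hzz
        have key : x * (m * D.e1 * m' * D.e2 * qq)
            = m * (x * D.e1 * D.e2) * (m' * qq) := by
          calc x * (m * D.e1 * m' * D.e2 * qq)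
              = (x * m) * (D.e1 * (m' * D.e2) * qq) := by simp only [mul_assoc]
            _ = (m * x) * (D.e1 * (D.e2 * m') * qq) := by
                rw [hx m hm, ← D.he2_M m' hm']
            _ = m * (x * D.e1 * D.e2) * (m' * qq) := by simp only [mul_assoc]
        rw [key, hxe, mul_zero, zero_mul]
      | zero => simp
      | add u v hu hv ihu ihv =>
        simp only [add_mul, mul_add]
        rw [ihu, ihv, add_zero]
      | smul c u hu ihu =>
        simp only [smul_mul_assoc, mul_smul_comm]
        rw [ihu, smul_zero]
    | zero => simp
    | add u v hu hv ihu ihv =>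
      rw [mul_add, ihu, ihv, add_zero]
    | smul c u hu ihu =>
      rw [mul_smul_comm, ihu, smul_zero]
  have := main 1 h1
  rwa [mul_one] at this

end StmtTenAux

/-- the antipode `S` is an algebra anti-homomorphism:
`S(b b') = S(b') S(b)` for all `b, b' ∈ B`. -/
theorem stmt10 {k : Type*} [Field k] {R : Type*} [Ring R] [Algebra k R] (D : D2H k R) :
    ∀ b ∈ D2.B D.toD2S.toD2, ∀ b' ∈ D2.B D.toD2S.toD2,
      D.S (b * b') = D.S b' * D.S b := by
  intro b hb b' hb'
  have hbm : ∀ y ∈ D.M, b * y = y * b := by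
    intro y hy
    have h : b ∈ Subalgebra.centralizer k (D.M : Set R) := hb
    exact ((Subalgebra.mem_centralizer_iff k).mp h y hy).symm
  have hb'm : ∀ y ∈ D.M, b' * y = y * b' := by
    intro y hy
    have h : b' ∈ Subalgebra.centralizer k (D.M : Set R) := hb'
    exact ((Subalgebra.mem_centralizer_iff k).mp h y hy).symm
  have hbb : ∀ y ∈ D.M, (b * b') * y = y * (b * b') := by
    intro y hy
    rw [mul_assoc, hb'm y hy, ← mul_assoc, hbm y hy, mul_assoc]
  have hS1 := D.hS_mem _ hbb
  have hS2 : ∀ y ∈ D.M, (D.S b' * D.S b) * y = y * (D.S b' * D.S b) := by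
    intro y hy
    rw [mul_assoc, D.hS_mem b hbm y hy, ← mul_assoc, D.hS_mem b' hb'm y hy,
      mul_assoc]
  have hxcomm : ∀ y ∈ D.M,
      (D.S (b * b') - D.S b' * D.S b) * y = y * (D.S (b * b') - D.S b' * D.S b) := by
    intro y hy
    rw [sub_mul, mul_sub, hS1 y hy, hS2 y hy]
  have key : ∀ a, a ∈ D.M1 → (∀ n ∈ D.N, a * n = n * a) →
      D.T ((D.S (b * b') - D.S b' * D.S b) * D.e1 * D.e2 * D.w * a) = 0 := by
    intro a ha haN
    have h1 : D.T (a * D.e2 * D.e1 * D.w * (b * b'))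
        = D.T (D.S (b * b') * D.e1 * D.e2 * D.w * a) :=
      StmtTenAux.hS_def' D a ha haN _ hbb
    have h2 := StmtTenAux.stepC D a ha haN b hbm b' hb'm
    have h3 : (D.S (b * b') - D.S b' * D.S b) * D.e1 * D.e2 * D.w * a
        = D.S (b * b') * D.e1 * D.e2 * D.w * a
          - D.S b' * D.S b * D.e1 * D.e2 * D.w * a := by
      simp only [sub_mul]
    rw [h3, map_sub, ← h1, h2, sub_self]
  exact sub_eq_zero.mp (StmtTenAux.injB D _ hxcomm key)
end

section
/- Key commutation relation: for all b ∈ B, w⁻¹ e₁ w b = λ⁻¹ b₍₂₎ w⁻¹ E_A(e₂ e₁ w b₍₁₎). Consequently, for all b ∈ B and x ∈ M₁, w⁻¹ x b = λ⁻¹ b₍₂₎ w⁻¹ E_{M₁}(e₂ x b₍₁₎), and for all x, y ∈ M₁ and b ∈ B, E_{M₁}(e₂ w y x b) = λ⁻¹ E_{M₁}(e₂ w y b₍₂₎) w⁻¹ E_{M₁}(e₂ w x b₍₁₎). -/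
open scoped TensorProduct
open TensorProduct

/-!
Both sides of the first relation lie in `C = C_{M₂}(N)`, and an element `x` of `C` is determined by
the numbers `T (c x a)` with `c ∈ B`, `a ∈ A`: expand `x` along the dual bases of `E_{M₁}` in `B` and
use that `T` is non-degenerate on `A`. Expanding `E_{M₁}(c b₍₂₎) ∈ V` along the dual bases
`f⁽¹⁾ ⊗ w f⁽²⁾` of `T` on `V` turns `T (c b₍₂₎ w⁻¹ E_A(e₂ e₁ w b₍₁₎) a)` into a sum of products of
pairings `⟨·, b₍₁₎⟩ ⟨·, b₍₂₎⟩`, which the defining property of `Δ` collapses into pairings with `b`;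
the functional `T (z ·)` on `B` is `⟨repA z, ·⟩` because `repA z e₂ e₁ = λ z w⁻¹ e₁`.
Both sides of the second relation are `M`-bimodule maps in `x`, and `M₁` is spanned by
`M e₁ M = M (e₁ w) M`, so it follows from the first; the third is the second applied to `w x`.
-/

namespace D2

variable {k : Type*} [Field k] {R : Type*} [Ring R] [Algebra k R] (D : D2 k R)

lemma mem_centralizer_of_comm {S : Set R} {x : R} (h : ∀ y ∈ S, x * y = y * x) :
    x ∈ Subalgebra.centralizer k S :=
  (Subalgebra.mem_centralizer_iff k).2 fun y hy => (h y hy).symm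

lemma comm_of_mem_centralizer {S : Set R} {x : R} (hx : x ∈ Subalgebra.centralizer k S) :
    ∀ y ∈ S, x * y = y * x :=
  fun y hy => (((Subalgebra.mem_centralizer_iff k).1 hx) y hy).symm

lemma B_le_C : D.B ≤ D.C :=
  Subalgebra.centralizer_le k _ _ fun _ hy => D.hNM hy

lemma V_le_B : D.V ≤ D.B := inf_le_right

lemma V_le_A : D.V ≤ D.A :=
  inf_le_inf_left _ (Subalgebra.centralizer_le k _ _ fun _ hy => D.hNM hy)

lemma e1_mem_C : D.e1 ∈ D.C := mem_centralizer_of_comm D.he1_N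

lemma e2_mem_B : D.e2 ∈ D.B := mem_centralizer_of_comm D.he2_M

lemma EM1_mem_centralizer {S : Set R} (hS : S ⊆ D.M1) {x : R}
    (hx : x ∈ Subalgebra.centralizer k S) : D.EM1 x ∈ Subalgebra.centralizer k S := by
  rw [Subalgebra.mem_centralizer_iff k] at hx ⊢
  intro y hy
  rw [← D.hEM1_left y (hS hy), hx y hy, D.hEM1_right y (hS hy)]

lemma EM1_mem_C {x : R} (hx : x ∈ D.C) : D.EM1 x ∈ D.C :=
  D.EM1_mem_centralizer (fun _ hy => D.hMM1 (D.hNM hy)) hx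

lemma EM1_mem_A {x : R} (hx : x ∈ D.C) : D.EM1 x ∈ D.A :=
  ⟨D.hEM1_mem x, D.EM1_mem_C hx⟩

lemma EM1_mem_V {x : R} (hx : x ∈ D.B) : D.EM1 x ∈ D.V :=
  ⟨D.hEM1_mem x, D.EM1_mem_centralizer (fun _ hy => D.hMM1 hy) hx⟩

lemma T_EM1_mul (x : R) {m : R} (hm : m ∈ D.M1) : D.T (D.EM1 x * m) = D.T (x * m) := by
  rw [← D.hEM1_right m hm x, D.hTEM1]

lemma T_mul_EM1 {m : R} (hm : m ∈ D.M1) (x : R) : D.T (m * D.EM1 x) = D.T (m * x) := by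
  rw [← D.hEM1_left m hm x, D.hTEM1]

lemma EM1_mul_e2_mul_e2 (x : R) : D.EM1 (x * D.e2) * D.e2 = D.lam • (x * D.e2) := by
  rw [D.hPP2 x, smul_smul, mul_inv_cancel₀ D.lam_ne, one_smul, ← D.hPP2 x]

lemma eqOn_M1 {X : Type*} [AddCommGroup X] [Module k X] {f g : R →ₗ[k] X}
    (h : ∀ m ∈ D.M, ∀ m' ∈ D.M, f (m * D.e1 * m') = g (m * D.e1 * m')) {x : R}
    (hx : x ∈ D.M1) : f x = g x := by
  rw [← Subalgebra.mem_toSubmodule, D.hM1_gen] at hx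
  exact LinearMap.eqOn_span (by rintro _ ⟨m, hm, m', hm', rfl⟩; exact h m hm m' hm') hx

lemma sum_xb_mul_e1_mul_yb : ∑ i, D.xb i * D.e1 * D.yb i = 1 := by
  set s := ∑ i, D.xb i * D.e1 * D.yb i
  have hgen (m) (hm : m ∈ D.M) (m') (hm' : m' ∈ D.M) : s * (m * D.e1 * m') = m * D.e1 * m' := by
    have hm_e1 : s * (m * D.e1) = m * D.e1 := by
      have hterm (i) : D.xb i * D.e1 * D.yb i * (m * D.e1) = D.xb i * D.E (D.yb i * m) * D.e1 := by
        have hym := D.M.mul_mem (D.hyb i) hm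
        calc D.xb i * D.e1 * D.yb i * (m * D.e1) = D.xb i * (D.e1 * (D.yb i * m) * D.e1) := by
              simp only [mul_assoc]
          _ = D.xb i * D.E (D.yb i * m) * D.e1 := by
              rw [D.he1_jones _ hym, D.he1_jones' _ hym, mul_assoc]
      rw [Finset.sum_mul, Finset.sum_congr rfl fun i _ => hterm i, ← Finset.sum_mul, D.hdual2 m hm]
    rw [← mul_assoc, hm_e1]
  simpa using D.eqOn_M1 (f := LinearMap.mulLeft k s) (g := LinearMap.id) hgen D.M1.one_mem

lemma T_mul_e1 {x : R} (hx : x ∈ D.B) : D.T (x * D.e1) = D.lam * D.T x := by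
  have hx' := (Subalgebra.mem_centralizer_iff k).1 hx
  have hterm (i) : D.T (x * (D.xb i * D.e1 * D.yb i)) = D.T (x * D.e1 * (D.yb i * D.xb i)) := by
    rw [← mul_assoc, ← mul_assoc, ← hx' _ (D.hxb i), mul_assoc, mul_assoc, D.hT_tr]
    simp only [mul_assoc]
  have hTx : D.T x = D.lam⁻¹ * D.T (x * D.e1) := by
    calc D.T x = D.T (x * ∑ i, D.xb i * D.e1 * D.yb i) := by rw [D.sum_xb_mul_e1_mul_yb, mul_one]
      _ = D.T (x * D.e1 * ∑ i, D.yb i * D.xb i) := by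
        simp only [Finset.mul_sum, map_sum, hterm]
      _ = D.lam⁻¹ * D.T (x * D.e1) := by
        rw [D.hindex', mul_smul_comm, mul_one, map_smul, smul_eq_mul]
  rw [hTx, ← mul_assoc, mul_inv_cancel₀ D.lam_ne, one_mul]

lemma eq_zero_of_forall_T_mul_eq_zero {x : R} (hx : x ∈ D.A) (h : ∀ a ∈ D.A, D.T (x * a) = 0) :
    x = 0 := by
  have hxN := (Subalgebra.mem_centralizer_iff k).1 hx.2
  have hEM_zero (j) : D.EM (x * D.zb j) = 0 := by
    have hxz : x * D.zb j ∈ D.M1 := D.M1.mul_mem hx.1 (D.hzb j).1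
    refine D.hU_nondeg _ (D.hEM_mem _ hxz) (fun n hn => ?_) fun u hu huN => ?_
    · rw [← D.hEM_right n (D.hNM hn) _ hxz, ← D.hEM_left n (D.hNM hn) _ hxz, mul_assoc,
        (D.hzb j).2 n hn, ← mul_assoc, ← hxN n hn, mul_assoc]
    · rw [← D.hEM_right u hu _ hxz, D.hTEM _ (D.M1.mul_mem hxz (D.hMM1 hu)), mul_assoc]
      exact h _ ⟨D.M1.mul_mem (D.hzb j).1 (D.hMM1 hu),
        (D.A.mul_mem ⟨(D.hzb j).1, mem_centralizer_of_comm (D.hzb j).2⟩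
          ⟨D.hMM1 hu, mem_centralizer_of_comm huN⟩).2⟩
  rw [← D.hdualA1 x hx.1]
  simp [hEM_zero]

lemma eq_of_forall_T_mul_mul_eq {x y : R} (hx : x ∈ D.C) (hy : y ∈ D.C)
    (h : ∀ c ∈ D.B, ∀ a ∈ D.A, D.T (c * x * a) = D.T (c * y * a)) : x = y := by
  have hv (i) : D.EM1 (D.vb i * x) = D.EM1 (D.vb i * y) := by
    have hvi : D.vb i ∈ D.C := D.B_le_C (mem_centralizer_of_comm (D.hvb i))
    rw [← sub_eq_zero, ← map_sub]
    refine D.eq_zero_of_forall_T_mul_eq_zero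
      (D.EM1_mem_A (D.C.sub_mem (D.C.mul_mem hvi hx) (D.C.mul_mem hvi hy))) fun a ha => ?_
    rw [D.T_EM1_mul _ ha.1, sub_mul, map_sub, h _ (mem_centralizer_of_comm (D.hvb i)) a ha, sub_self]
  rw [← D.hdualB2 x, ← D.hdualB2 y]
  simp only [hv]

end D2

namespace D2S

open D2

variable {k : Type*} [Field k] {R : Type*} [Ring R] [Algebra k R] (D : D2S k R)

lemma w_mem_V : D.w ∈ D.V := ⟨D.hw_mem.1, mem_centralizer_of_comm D.hw_mem.2⟩

lemma winv_mem_V : D.winv ∈ D.V := ⟨D.hwinv_mem.1, mem_centralizer_of_comm D.hwinv_mem.2⟩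

lemma f1_mem_V (l : Fin D.nV) : D.f1 l ∈ D.V := ⟨(D.hf1 l).1, mem_centralizer_of_comm (D.hf1 l).2⟩

lemma f2_mem_V (l : Fin D.nV) : D.f2 l ∈ D.V := ⟨(D.hf2 l).1, mem_centralizer_of_comm (D.hf2 l).2⟩

lemma e1_eq_smul_e1_mul_w_mul : D.e1 = D.lam⁻¹ • (D.e1 * D.w * D.EM (D.e1 * D.winv)) := by
  have hs : D.EM (D.e1 * D.winv) ∈ D.M := D.hEM_mem _ (D.M1.mul_mem D.he1_mem D.hwinv_mem.1)
  calc D.e1 = D.e1 * D.winv * D.w := by rw [mul_assoc, D.hw_inv.2, mul_one]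
    _ = D.lam⁻¹ • (D.e1 * D.EM (D.e1 * D.winv)) * D.w := by rw [← D.hPP1' _ D.hwinv_mem.1]
    _ = D.lam⁻¹ • (D.e1 * D.w * D.EM (D.e1 * D.winv)) := by
      rw [smul_mul_assoc, mul_assoc, ← D.hw_mem.2 _ hs, mul_assoc]

lemma eqOn_M1_of_bimodule {f g : R →ₗ[k] R}
    (hf : ∀ m ∈ D.M, ∀ m' ∈ D.M, ∀ x, f (m * x * m') = m * f x * m')
    (hg : ∀ m ∈ D.M, ∀ m' ∈ D.M, ∀ x, g (m * x * m') = m * g x * m')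
    (he : f (D.e1 * D.w) = g (D.e1 * D.w)) {x : R} (hx : x ∈ D.M1) : f x = g x := by
  refine D.eqOn_M1 (fun m hm m' hm' => ?_) hx
  have hs : D.EM (D.e1 * D.winv) * m' ∈ D.M :=
    D.M.mul_mem (D.hEM_mem _ (D.M1.mul_mem D.he1_mem D.hwinv_mem.1)) hm'
  have hgen : m * D.e1 * m' = D.lam⁻¹ • (m * (D.e1 * D.w) * (D.EM (D.e1 * D.winv) * m')) := by
    conv_lhs => rw [e1_eq_smul_e1_mul_w_mul]
    simp only [mul_smul_comm, smul_mul_assoc, mul_assoc]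
  rw [hgen, map_smul, map_smul, hf m hm _ hs, hg m hm _ hs, he]

lemma T_mul_eq_sum_dual {v : R} (hv : v ∈ D.V) (x : R) :
    D.T (v * x) = ∑ l, D.T (v * (D.w * D.f2 l)) * D.T (D.f1 l * x) := by
  conv_lhs => rw [← D.hw_dual v hv.1 (comm_of_mem_centralizer hv.2)]
  simp only [Finset.sum_mul, map_sum, smul_mul_assoc, map_smul, smul_eq_mul]

lemma T_mul_winv_mul_e1_mul_w_mul {z y : R} (hz : z ∈ D.B) (hy : y ∈ D.B) :
    D.T (z * D.winv * D.e1 * D.w * y) = D.lam * D.T (z * y) := by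
  have hB : D.w * y * z * D.winv ∈ D.B :=
    D.B.mul_mem (D.B.mul_mem (D.B.mul_mem (D.V_le_B D.w_mem_V) hy) hz) (D.V_le_B D.winv_mem_V)
  rw [mul_assoc _ D.w, D.hT_tr, ← mul_assoc, ← mul_assoc, D.T_mul_e1 hB, D.hT_tr,
    ← mul_assoc, ← mul_assoc, D.hw_inv.2, one_mul, D.hT_tr]

end D2S

namespace D2H

open D2 D2S

variable {k : Type*} [Field k] {R : Type*} [Ring R] [Algebra k R] (D : D2H k R)

lemma T_eq_lam_sq_mul_pr (a y : R) : D.T (a * D.e2 * D.e1 * D.w * y) = D.lam ^ 2 * D.pr a y := by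
  rw [pr, ← mul_assoc, ← mul_pow, mul_inv_cancel₀ D.lam_ne, one_pow, one_mul]

lemma sum_pr_mul_pr {a₁ a₂ b : R} (ha₁ : a₁ ∈ D.A) (ha₂ : a₂ ∈ D.A) (hb : b ∈ D.B) {n : ℕ}
    {b₁ b₂ : Fin n → R} (hΔ : D.Δ b = ∑ i, b₁ i ⊗ₜ[k] b₂ i) :
    ∑ i, D.pr a₁ (b₁ i) * D.pr a₂ (b₂ i) = D.pr (a₁ * a₂) b :=
  D.hΔ_def a₁ ha₁.1 (comm_of_mem_centralizer ha₁.2) a₂ ha₂.1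
    (comm_of_mem_centralizer ha₂.2) b (comm_of_mem_centralizer hb) n b₁ b₂ hΔ

/-- The element of `A` representing the functional `T(z ·)` on `B` under the pairing. -/
noncomputable def repA (z : R) : R := D.lam⁻¹ • D.EM1 (z * D.winv * D.e1 * D.e2)

lemma repA_mem_A {z : R} (hz : z ∈ D.C) : D.repA z ∈ D.A :=
  D.A.smul_mem (D.EM1_mem_A (D.C.mul_mem (D.C.mul_mem (D.C.mul_mem hz
    (D.B_le_C (D.V_le_B D.winv_mem_V))) D.e1_mem_C) (D.B_le_C D.e2_mem_B))) _

lemma mul_repA_mul_e2_mul_e1 (a z : R) :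
    a * D.repA z * D.e2 * D.e1 = D.lam • (a * z * D.winv * D.e1) := by
  have he2 : D.repA z * D.e2 = z * D.winv * D.e1 * D.e2 := by
    rw [repA, smul_mul_assoc, D.EM1_mul_e2_mul_e2, smul_smul, inv_mul_cancel₀ D.lam_ne, one_smul]
  calc a * D.repA z * D.e2 * D.e1 = a * (z * D.winv) * (D.e1 * D.e2 * D.e1) := by
        rw [mul_assoc a, he2]; simp only [mul_assoc]
    _ = D.lam • (a * z * D.winv * D.e1) := by
        rw [D.hbraid1, mul_smul_comm]; simp only [mul_assoc]

lemma pr_mul_repA (a z y : R) :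
    D.pr (a * D.repA z) y = D.lam⁻¹ * D.T (a * z * D.winv * D.e1 * D.w * y) := by
  rw [pr, D.mul_repA_mul_e2_mul_e1, smul_mul_assoc, smul_mul_assoc, map_smul, smul_eq_mul,
    ← mul_assoc, pow_two, mul_assoc D.lam⁻¹, inv_mul_cancel₀ D.lam_ne, mul_one]

lemma pr_repA {z y : R} (hz : z ∈ D.B) (hy : y ∈ D.B) : D.pr (D.repA z) y = D.T (z * y) := by
  rw [← one_mul (D.repA z), pr_mul_repA, one_mul, D.T_mul_winv_mul_e1_mul_w_mul hz hy, ← mul_assoc,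
    inv_mul_cancel₀ D.lam_ne, one_mul]

lemma T_mul_sweedler_term_mul {c a q : R} (hc : c ∈ D.B) (ha : a ∈ D.A) (hq : q ∈ D.B) (p : R) :
    D.T (c * (q * D.winv * D.EM1 (D.e2 * D.e1 * D.w * p)) * a)
      = D.lam ^ 2 * ∑ l, D.pr (a * D.f1 l * D.winv) p * D.pr (D.repA (D.w * D.f2 l * c)) q := by
  have hwinv : D.winv ∈ D.M1 := D.hwinv_mem.1
  have hQ : D.winv * D.EM1 (D.e2 * D.e1 * D.w * p) * a ∈ D.M1 :=
    D.M1.mul_mem (D.M1.mul_mem hwinv (D.hEM1_mem _)) ha.1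
  have hleft (l) : D.T (D.EM1 (c * q) * (D.w * D.f2 l)) = D.pr (D.repA (D.w * D.f2 l * c)) q := by
    have hwfc : D.w * D.f2 l * c ∈ D.B :=
      D.B.mul_mem (D.V_le_B (D.V.mul_mem D.w_mem_V (D.f2_mem_V l))) hc
    rw [D.pr_repA hwfc hq, D.T_EM1_mul _ (D.M1.mul_mem D.hw_mem.1 (D.hf2 l).1), D.hT_tr]
    simp only [mul_assoc]
  have hright (l) : D.T (D.f1 l * (D.winv * D.EM1 (D.e2 * D.e1 * D.w * p) * a))
      = D.lam ^ 2 * D.pr (a * D.f1 l * D.winv) p := by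
    rw [← D.T_eq_lam_sq_mul_pr, ← mul_assoc, D.hT_tr, ← mul_assoc, ← mul_assoc,
      D.T_mul_EM1 (D.M1.mul_mem (D.M1.mul_mem ha.1 (D.hf1 l).1) hwinv)]
    simp only [mul_assoc]
  calc D.T (c * (q * D.winv * D.EM1 (D.e2 * D.e1 * D.w * p)) * a)
      = D.T (D.EM1 (c * q) * (D.winv * D.EM1 (D.e2 * D.e1 * D.w * p) * a)) := by
        rw [D.T_EM1_mul _ hQ]; simp only [mul_assoc]
    _ = ∑ l, D.pr (D.repA (D.w * D.f2 l * c)) q * (D.lam ^ 2 * D.pr (a * D.f1 l * D.winv) p) := by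
        rw [D.T_mul_eq_sum_dual (D.EM1_mem_V (D.B.mul_mem hc hq))]
        simp only [hleft, hright]
    _ = _ := by
        rw [Finset.mul_sum]
        exact Finset.sum_congr rfl fun l _ => by ring

lemma sum_T_mul_sweedler_term_mul {b : R} (hb : b ∈ D.B) {n : ℕ} {b₁ b₂ : Fin n → R}
    (hb₂ : ∀ i, b₂ i ∈ D.B) (hΔ : D.Δ b = ∑ i, b₁ i ⊗ₜ[k] b₂ i) {c a : R} (hc : c ∈ D.B)
    (ha : a ∈ D.A) :
    ∑ i, D.T (c * (b₂ i * D.winv * D.EM1 (D.e2 * D.e1 * D.w * b₁ i)) * a)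
      = D.lam * D.T (c * (D.winv * D.e1 * D.w * b) * a) := by
  have ha₁ (l) : a * D.f1 l * D.winv ∈ D.A :=
    D.A.mul_mem (D.A.mul_mem ha (D.V_le_A (D.f1_mem_V l))) (D.V_le_A D.winv_mem_V)
  have ha₂ (l) : D.repA (D.w * D.f2 l * c) ∈ D.A :=
    D.repA_mem_A (D.B_le_C (D.B.mul_mem (D.V_le_B (D.V.mul_mem D.w_mem_V (D.f2_mem_V l))) hc))
  have hprod (l) : D.pr (a * D.f1 l * D.winv * D.repA (D.w * D.f2 l * c)) b
      = D.lam⁻¹ * D.T (a * (D.f1 l * D.f2 l) * (c * (D.winv * D.e1 * D.w * b))) := by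
    rw [pr_mul_repA]
    congr 2
    simp only [mul_assoc, ← mul_assoc D.winv D.w, D.hw_inv.2, one_mul]
  calc ∑ i, D.T (c * (b₂ i * D.winv * D.EM1 (D.e2 * D.e1 * D.w * b₁ i)) * a)
      = D.lam ^ 2 * ∑ l, D.pr (a * D.f1 l * D.winv * D.repA (D.w * D.f2 l * c)) b := by
        simp only [D.T_mul_sweedler_term_mul hc ha (hb₂ _), ← Finset.mul_sum]
        rw [Finset.sum_comm]
        simp only [D.sum_pr_mul_pr (ha₁ _) (ha₂ _) hb hΔ]
    _ = D.lam * D.T (c * (D.winv * D.e1 * D.w * b) * a) := by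
        simp only [hprod, ← Finset.mul_sum, ← map_sum, ← Finset.sum_mul, D.hf_one, mul_one]
        rw [D.hT_tr, ← mul_assoc, pow_two, mul_assoc D.lam, mul_inv_cancel₀ D.lam_ne, mul_one]

lemma winv_mul_e1_mul_w_mul_eq_sum {b : R} (hb : b ∈ D.B) {n : ℕ} {b₁ b₂ : Fin n → R}
    (hb₁ : ∀ i, b₁ i ∈ D.B) (hb₂ : ∀ i, b₂ i ∈ D.B) (hΔ : D.Δ b = ∑ i, b₁ i ⊗ₜ[k] b₂ i) :
    D.winv * D.e1 * D.w * b
      = D.lam⁻¹ • ∑ i, b₂ i * D.winv * D.EM1 (D.e2 * D.e1 * D.w * b₁ i) := by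
  have hwC : D.w ∈ D.C := D.B_le_C (D.V_le_B D.w_mem_V)
  have hwinvC : D.winv ∈ D.C := D.B_le_C (D.V_le_B D.winv_mem_V)
  have he2e1wC : D.e2 * D.e1 * D.w ∈ D.C :=
    D.C.mul_mem (D.C.mul_mem (D.B_le_C D.e2_mem_B) D.e1_mem_C) hwC
  refine D.eq_of_forall_T_mul_mul_eq
    (D.C.mul_mem (D.C.mul_mem (D.C.mul_mem hwinvC D.e1_mem_C) hwC) (D.B_le_C hb))
    (D.C.smul_mem (D.C.sum_mem fun i _ => D.C.mul_mem (D.C.mul_mem (D.B_le_C (hb₂ i)) hwinvC)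
      (D.EM1_mem_C (D.C.mul_mem he2e1wC (D.B_le_C (hb₁ i))))) _) fun c hc a ha => ?_
  rw [mul_smul_comm, smul_mul_assoc, map_smul, smul_eq_mul, Finset.mul_sum, Finset.sum_mul,
    map_sum, D.sum_T_mul_sweedler_term_mul hb hb₂ hΔ hc ha, inv_mul_cancel_left₀ D.lam_ne]

/-- `p ⊗ q ↦ (x ↦ q w⁻¹ E_{M₁}(e₂ x p))`: the right-hand sides of the commutation relations are
`λ⁻¹ • sweedler (Δ b) x`, whatever representation of `Δ b` is used to write them. -/
noncomputable def sweedler : R ⊗[k] R →ₗ[k] R →ₗ[k] R :=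
  TensorProduct.lift <| LinearMap.mk₂ k
    (fun p q => LinearMap.mulLeft k (q * D.winv) ∘ₗ D.EM1 ∘ₗ LinearMap.mulLeft k D.e2 ∘ₗ
      LinearMap.mulRight k p)
    (fun p p' q => by ext x; simp [mul_add])
    (fun c p q => by ext x; simp)
    (fun p q q' => by ext x; simp [add_mul, mul_assoc])
    (fun c p q => by ext x; simp [mul_assoc])

lemma sweedler_tmul (p q x : R) :
    D.sweedler (p ⊗ₜ[k] q) x = q * D.winv * D.EM1 (D.e2 * x * p) := by
  simp [sweedler, mul_assoc]

lemma sweedler_sum {n : ℕ} (b₁ b₂ : Fin n → R) (x : R) :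
    D.sweedler (∑ i, b₁ i ⊗ₜ[k] b₂ i) x = ∑ i, b₂ i * D.winv * D.EM1 (D.e2 * x * b₁ i) := by
  simp only [map_sum, LinearMap.sum_apply, sweedler_tmul]

lemma sweedler_Δ_mul_mul {b : R} (hb : b ∈ D.B) {m m' : R} (hm : m ∈ D.M) (hm' : m' ∈ D.M)
    (x : R) : D.sweedler (D.Δ b) (m * x * m') = m * D.sweedler (D.Δ b) x * m' := by
  refine Submodule.span_induction (p := fun t _ => D.sweedler t (m * x * m') =
      m * D.sweedler t x * m') ?_ ?_ ?_ ?_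
    (D.hΔ_mem b (comm_of_mem_centralizer hb))
  · rintro _ ⟨p, hp, q, hq, rfl⟩
    have harg : D.e2 * (m * x * m') * p = m * (D.e2 * x * p) * m' := by
      simp only [← mul_assoc, D.he2_M m hm]
      simp only [mul_assoc, hp m' hm']
    rw [sweedler_tmul, sweedler_tmul, harg, D.hEM1_right _ (D.hMM1 hm'),
      D.hEM1_left _ (D.hMM1 hm)]
    simp only [← mul_assoc]
    rw [mul_assoc q D.winv m, D.hwinv_mem.2 m hm, ← mul_assoc q m D.winv, hq m hm]
  · simp
  · intro t t' _ _ ht ht'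
    simp only [map_add, LinearMap.add_apply, ht, ht', mul_add, add_mul]
  · intro c t _ ht
    simp only [map_smul, LinearMap.smul_apply, ht, mul_smul_comm, smul_mul_assoc]

lemma exists_sum_tmul_eq_Δ {b : R} (hb : b ∈ D.B) :
    ∃ (n : ℕ) (b₁ b₂ : Fin n → R), (∀ i, b₁ i ∈ D.B) ∧ (∀ i, b₂ i ∈ D.B) ∧
      D.Δ b = ∑ i, b₁ i ⊗ₜ[k] b₂ i := by
  obtain ⟨n, c, t, hsum⟩ := Submodule.mem_span_set'.1
    (D.hΔ_mem b (comm_of_mem_centralizer hb))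
  choose p hp q hq ht using fun i => (t i).2
  refine ⟨n, fun i => c i • p i, q, fun i => D.B.smul_mem (mem_centralizer_of_comm (hp i)) _,
    fun i => mem_centralizer_of_comm (hq i), ?_⟩
  simp only [← hsum, ht, TensorProduct.smul_tmul']

lemma winv_mul_mul_eq_sweedler {b x : R} (hb : b ∈ D.B) (hx : x ∈ D.M1) :
    D.winv * x * b = D.lam⁻¹ • D.sweedler (D.Δ b) x := by
  obtain ⟨n, b₁, b₂, hb₁, hb₂, hΔ⟩ := D.exists_sum_tmul_eq_Δ hb
  have hbM := (Subalgebra.mem_centralizer_iff k).1 hb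
  have hf (m) (hm : m ∈ D.M) (m') (hm' : m' ∈ D.M) (x : R) :
      D.winv * (m * x * m' * b) = m * (D.winv * (x * b)) * m' := by
    rw [mul_assoc _ m', hbM m' hm']
    simp only [← mul_assoc]
    rw [D.hwinv_mem.2 m hm]
  have hg (m) (hm : m ∈ D.M) (m') (hm' : m' ∈ D.M) (x : R) :
      D.lam⁻¹ • D.sweedler (D.Δ b) (m * x * m') = m * (D.lam⁻¹ • D.sweedler (D.Δ b) x) * m' := by
    rw [D.sweedler_Δ_mul_mul hb hm hm', mul_smul_comm, smul_mul_assoc]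
  have he : D.winv * (D.e1 * D.w * b) = D.lam⁻¹ • D.sweedler (D.Δ b) (D.e1 * D.w) := by
    rw [hΔ, sweedler_sum, ← mul_assoc, ← mul_assoc, D.winv_mul_e1_mul_w_mul_eq_sum hb hb₁ hb₂ hΔ]
    simp only [mul_assoc]
  simpa only [LinearMap.comp_apply, LinearMap.mulLeft_apply, LinearMap.mulRight_apply,
    LinearMap.smul_apply, mul_assoc] using D.eqOn_M1_of_bimodule
    (f := LinearMap.mulLeft k D.winv ∘ₗ LinearMap.mulRight k b)
    (g := D.lam⁻¹ • D.sweedler (D.Δ b)) (by simpa using hf) (by simpa using hg) (by simpa using he) hx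

lemma winv_mul_mul_eq_sum {b x : R} (hb : b ∈ D.B) {n : ℕ} {b₁ b₂ : Fin n → R}
    (hΔ : D.Δ b = ∑ i, b₁ i ⊗ₜ[k] b₂ i) (hx : x ∈ D.M1) :
    D.winv * x * b = D.lam⁻¹ • ∑ i, b₂ i * D.winv * D.EM1 (D.e2 * x * b₁ i) := by
  rw [← sweedler_sum, ← hΔ, D.winv_mul_mul_eq_sweedler hb hx]

lemma EM1_e2_w_mul_mul_eq_sum {b x y : R} (hb : b ∈ D.B) {n : ℕ} {b₁ b₂ : Fin n → R}
    (hΔ : D.Δ b = ∑ i, b₁ i ⊗ₜ[k] b₂ i) (hx : x ∈ D.M1) :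
    D.EM1 (D.e2 * D.w * y * x * b)
      = D.lam⁻¹ • ∑ i, D.EM1 (D.e2 * D.w * y * b₂ i) * D.winv * D.EM1 (D.e2 * D.w * x * b₁ i) := by
  have hxb : x * b = D.lam⁻¹ • ∑ i, b₂ i * D.winv * D.EM1 (D.e2 * (D.w * x) * b₁ i) := by
    rw [← D.winv_mul_mul_eq_sum hb hΔ (D.M1.mul_mem D.hw_mem.1 hx), ← mul_assoc, D.hw_inv.2,
      one_mul]
  rw [mul_assoc _ x b, hxb, mul_smul_comm, map_smul, Finset.mul_sum, map_sum]
  congr 1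
  refine Finset.sum_congr rfl fun i _ => ?_
  rw [mul_assoc (D.EM1 _) D.winv, ← D.hEM1_right _ (D.M1.mul_mem D.hwinv_mem.1 (D.hEM1_mem _))]
  simp only [mul_assoc]

end D2H

open D2 D2H

/-- key commutation relation: for all `b ∈ B`,
`w⁻¹ e₁ w b = λ⁻¹ b₍₂₎ w⁻¹ E_A(e₂ e₁ w b₍₁₎)`; consequently, for all `x ∈ M₁`,
`w⁻¹ x b = λ⁻¹ b₍₂₎ w⁻¹ E_{M₁}(e₂ x b₍₁₎)`, and for all `x, y ∈ M₁`,
`E_{M₁}(e₂ w y x b) = λ⁻¹ E_{M₁}(e₂ w y b₍₂₎) w⁻¹ E_{M₁}(e₂ w x b₍₁₎)`.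
(Sweedler sums are expressed through an arbitrary finite representation
`Δ(b) = ∑ b1 i ⊗ b2 i`.) -/
theorem stmt11 {k : Type*} [Field k] {R : Type*} [Ring R] [Algebra k R] (D : D2H k R) :
    ∀ b ∈ D2.B D.toD2S.toD2,
    ∀ (m : ℕ) (b1 b2 : Fin m → R), D.Δ b = ∑ i, b1 i ⊗ₜ[k] b2 i →
      (D.winv * D.e1 * D.w * b
        = D.lam⁻¹ • ∑ i, b2 i * D.winv * D.EM1 (D.e2 * D.e1 * D.w * b1 i)) ∧
      (∀ x ∈ D.M1, D.winv * x * b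
        = D.lam⁻¹ • ∑ i, b2 i * D.winv * D.EM1 (D.e2 * x * b1 i)) ∧
      (∀ x ∈ D.M1, ∀ y ∈ D.M1,
        D.EM1 (D.e2 * D.w * y * x * b)
          = D.lam⁻¹ • ∑ i, D.EM1 (D.e2 * D.w * y * b2 i) * D.winv *
              D.EM1 (D.e2 * D.w * x * b1 i)) := by
  intro b hb m b1 b2 hΔ
  have hcomm (x) (hx : x ∈ D.M1) := D.winv_mul_mul_eq_sum hb hΔ hx
  refine ⟨?_, hcomm, fun x hx _ _ => D.EM1_e2_w_mul_mul_eq_sum hb hΔ hx⟩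
  simpa only [mul_assoc] using hcomm _ (D.M1.mul_mem D.he1_mem D.hw_mem.1)
end
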